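/- Let d ≥ 1 be an integer and let a₂, b₁, b₂ be reals with a₁ := d ≥ b₁ > 0, a₂ = 1, b₂ ≥ 0, and 1 ≥ b₂ if d = b₁. Then there exists C < ∞ depending only on d, b₁, b₂ (in particular independent of L and x) such that for every real L ≥ 1 and every x ∈ ℤ^d with |x| ≥ 2L: Σ_{y∈ℤ^d} ⟨x−y⟩_L^{−d}·(log⟨(x−y)/L⟩₁)^{−1} · ⟨y⟩_L^{−b₁}·(log⟨y/L⟩₁)^{−b₂} ≤ C · log(log⟨x/L⟩₁) · ⟨x⟩_L^{−b₁}·(log⟨x/L⟩₁)^{−b₂}. (Convolution bound on power functions with logarithmic corrections, case a₁ = d, a₂ = 1.) -/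

import Mathlib

open scoped BigOperators
open Real Filter

noncomputable section

/-- Embed a lattice point into Euclidean space. -/
def toR (d : ℕ) (x : Fin d → ℤ) : EuclideanSpace ℝ (Fin d) := WithLp.toLp 2 (fun i => (x i : ℝ))

/-- Euclidean norm of a lattice point. -/
def nrm (d : ℕ) (x : Fin d → ℤ) : ℝ := ‖toR d x‖

/-- Euclidean inner product between `k` and a lattice point `x`. -/
def dotp (d : ℕ) (k : EuclideanSpace ℝ (Fin d)) (x : Fin d → ℤ) : ℝ :=
  ∑ i, k i * (x i : ℝ)

/-- `D` is a (symmetric) step distribution on `ℤ^d`. -/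
def IsStepDistribution (d : ℕ) (D : (Fin d → ℤ) → ℝ) : Prop :=
  (∀ x, 0 ≤ D x) ∧ HasSum D 1 ∧ (∀ x, D (-x) = D x)

/-- The power-law condition with parameters `α, L, c`. -/
def PowerLawCondition (d : ℕ) (α L c : ℝ) (D : (Fin d → ℤ) → ℝ) : Prop :=
  ∀ x, c * L ^ (-(d : ℝ)) * (max (nrm d x / L) 1) ^ (-(d : ℝ) - α) ≤ D x ∧
       D x ≤ c⁻¹ * L ^ (-(d : ℝ)) * (max (nrm d x / L) 1) ^ (-(d : ℝ) - α)

/-- Fourier transform `D̂(k) = Σ_x cos(k⬝x) D(x)`. -/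
def fhat (d : ℕ) (D : (Fin d → ℤ) → ℝ) (k : EuclideanSpace ℝ (Fin d)) : ℝ :=
  ∑' x : Fin d → ℤ, Real.cos (dotp d k x) * D x

/-- `n`-fold convolution of `D` (with the 0-fold convolution the delta at 0). -/
def convPow (d : ℕ) (D : (Fin d → ℤ) → ℝ) : ℕ → (Fin d → ℤ) → ℝ
  | 0 => fun x => if x = 0 then 1 else 0
  | n + 1 => fun x => ∑' y : Fin d → ℤ, convPow d D n y * D (x - y)

/-- Random-walk Green function `S₁(x) = Σ_n D^{*n}(x)`. -/
def green (d : ℕ) (D : (Fin d → ℤ) → ℝ) (x : Fin d → ℤ) : ℝ :=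
  ∑' n : ℕ, convPow d D n x

/-- `⟨t⟩_r = (π/2) ⬝ max(t, r)`. -/
def vee (t r : ℝ) : ℝ := Real.pi / 2 * max t r

/-- The constant `γ_α`. -/
def gammaA (d : ℕ) (α : ℝ) : ℝ :=
  Real.Gamma (((d : ℝ) - α) / 2) /
    (2 ^ α * Real.pi ^ ((d : ℝ) / 2) * Real.Gamma (α / 2))


set_option maxHeartbeats 1000000

set_option linter.dupNamespace false
namespace ConvAux
open Finset

lemma pi_half_gt_one : (1:ℝ) < π/2 := by nlinarith [Real.pi_gt_three]
lemma pi_half_pos : (0:ℝ) < π/2 := by linarith [pi_half_gt_one]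
lemma l0_pos : 0 < Real.log (π/2) := Real.log_pos pi_half_gt_one
lemma l0_lt_one : Real.log (π/2) < 1 := by
  rw [← Real.log_exp 1]
  apply Real.log_lt_log pi_half_pos
  nlinarith [Real.exp_one_gt_d9, Real.pi_lt_d2]
lemma log_pi_gt_one : 1 < Real.log π := by
  rw [← Real.log_exp 1]
  apply Real.log_lt_log (Real.exp_pos 1)
  nlinarith [Real.exp_one_lt_d9, Real.pi_gt_three]

variable {d : ℕ}

lemma nrm_nonneg (y : Fin d → ℤ) : 0 ≤ nrm d y := norm_nonneg _

lemma toR_sub (x y : Fin d → ℤ) : toR d (x - y) = toR d x - toR d y := by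
  ext i
  simp [toR]

lemma nrm_triangle (x y : Fin d → ℤ) : nrm d x ≤ nrm d (x - y) + nrm d y := by
  have : toR d x = toR d (x - y) + toR d y := by rw [toR_sub]; abel
  calc nrm d x = ‖toR d (x-y) + toR d y‖ := by rw [nrm, this]
    _ ≤ _ := norm_add_le _ _

lemma abs_coord_le (y : Fin d → ℤ) (i : Fin d) : |(y i : ℝ)| ≤ nrm d y := by
  have h := EuclideanSpace.norm_eq (toR d y)
  rw [nrm, h]
  have h1 : |(y i : ℝ)| = Real.sqrt (‖toR d y i‖^2) := by
    rw [Real.sqrt_sq_eq_abs]; simp [toR]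
  rw [h1]
  apply Real.sqrt_le_sqrt
  exact Finset.single_le_sum (f := fun j => ‖toR d y j‖^2) (fun j _ => sq_nonneg _) (mem_univ i)

lemma vee_pos {L : ℝ} (hL : 0 < L) (t : ℝ) : 0 < vee t L :=
  mul_pos pi_half_pos (lt_of_lt_of_le hL (le_max_right _ _))

lemma vee_one_pos (u : ℝ) : 0 < vee u 1 := vee_pos one_pos u

lemma vee_one_ge (u : ℝ) : π/2 ≤ vee u 1 := by
  have h : (1:ℝ) ≤ max u 1 := le_max_right _ _
  rw [vee]
  nlinarith [pi_half_pos]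

lemma vee_div_eq {L : ℝ} (hL : 0 < L) (t : ℝ) : vee (t/L) 1 = vee t L / L := by
  rw [vee, vee]
  rw [show (1:ℝ) = L / L by rw [div_self hL.ne']]
  rw [max_div_div_right hL.le, mul_div_assoc]

lemma log_vee_ge (u : ℝ) : Real.log (π/2) ≤ Real.log (vee u 1) :=
  Real.log_le_log pi_half_pos (vee_one_ge u)

lemma log_vee_pos (u : ℝ) : 0 < Real.log (vee u 1) := lt_of_lt_of_le l0_pos (log_vee_ge u)

end ConvAux
namespace ConvAux
open Finset
variable {d : ℕ}

lemma card_nrm_le (s : Finset (Fin d → ℤ)) (r : ℝ) (hr : 1 ≤ r) :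
    ((s.filter fun y => nrm d y ≤ r).card : ℝ) ≤ (5*r)^d := by
  have hsub : s.filter (fun y => nrm d y ≤ r) ⊆
      Fintype.piFinset (fun _ : Fin d => Finset.Icc (-⌈r⌉) ⌈r⌉) := by
    intro y hy
    rw [Finset.mem_filter] at hy
    rw [Fintype.mem_piFinset]
    intro i
    rw [Finset.mem_Icc]
    have h1 : |(y i : ℝ)| ≤ r := (abs_coord_le y i).trans hy.2
    have h2 : ((y i : ℤ) : ℝ) ≤ (⌈r⌉ : ℝ) := le_trans (le_abs_self _) (h1.trans (Int.le_ceil r))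
    have h3 : ((-⌈r⌉ : ℤ) : ℝ) ≤ ((y i : ℤ) : ℝ) := by
      push_cast
      have := neg_abs_le ((y i : ℤ) : ℝ)
      have := Int.le_ceil r
      linarith
    exact ⟨by exact_mod_cast h3, by exact_mod_cast h2⟩
  have hcard := Finset.card_le_card hsub
  have hpicard : (Fintype.piFinset (fun _ : Fin d => Finset.Icc (-⌈r⌉) ⌈r⌉)).card
      = (⌈r⌉ + 1 - -⌈r⌉).toNat ^ d := by
    rw [Fintype.card_piFinset]
    simp [Int.card_Icc]
  have hr1 : (1:ℤ) ≤ ⌈r⌉ := by exact_mod_cast Int.le_ceil_iff.mpr (by push_cast; linarith)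
  have htn : (((⌈r⌉ + 1 - -⌈r⌉).toNat : ℤ) : ℝ) = 2*(⌈r⌉:ℝ) + 1 := by
    rw [Int.toNat_of_nonneg (by omega)]
    push_cast; ring
  calc ((s.filter fun y => nrm d y ≤ r).card : ℝ)
      ≤ ((⌈r⌉ + 1 - -⌈r⌉).toNat ^ d : ℕ) := by exact_mod_cast (hpicard ▸ hcard)
    _ = (2*(⌈r⌉:ℝ) + 1)^d := by push_cast [← htn]; norm_cast
    _ ≤ (5*r)^d := by
        apply pow_le_pow_left₀ (by positivity)
        have := Int.ceil_lt_add_one r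
        have : (⌈r⌉ : ℝ) < r + 1 := this
        linarith

/-- dyadic scale index of a lattice point -/
def sidx (d : ℕ) (L : ℝ) (y : Fin d → ℤ) : ℕ := Nat.log 2 ⌊max (nrm d y) L / L⌋₊

lemma sidx_spec {L : ℝ} (hL : 1 ≤ L) (y : Fin d → ℤ) :
    (2:ℝ)^(sidx d L y) * L ≤ max (nrm d y) L ∧
      max (nrm d y) L < (2:ℝ)^(sidx d L y + 1) * L := by
  have hL0 : (0:ℝ) < L := by linarith
  have hge : (1:ℝ) ≤ max (nrm d y) L / L := by
    rw [le_div_iff₀ hL0]; simpa using le_max_right (nrm d y) L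
  set u := max (nrm d y) L / L with hu
  have hn1 : 1 ≤ ⌊u⌋₊ := Nat.one_le_iff_ne_zero.mpr (by
    intro h
    have := Nat.floor_eq_zero.mp h
    linarith)
  constructor
  · have h1 : (2:ℕ)^(Nat.log 2 ⌊u⌋₊) ≤ ⌊u⌋₊ := Nat.pow_log_le_self 2 (by omega)
    have h2 : ((⌊u⌋₊ : ℝ)) ≤ u := Nat.floor_le (by linarith)
    have : (2:ℝ)^(sidx d L y) ≤ u := by
      calc (2:ℝ)^(sidx d L y) = ((2^(Nat.log 2 ⌊u⌋₊) : ℕ) : ℝ) := by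
            rw [sidx]; push_cast; ring
        _ ≤ (⌊u⌋₊ : ℝ) := by exact_mod_cast h1
        _ ≤ u := h2
    calc (2:ℝ)^(sidx d L y) * L ≤ u * L := by nlinarith
      _ = max (nrm d y) L := by rw [hu]; field_simp
  · have h1 : ⌊u⌋₊ < 2^(Nat.log 2 ⌊u⌋₊ + 1) := Nat.lt_pow_succ_log_self (by omega) _
    have h2 : u < (⌊u⌋₊ : ℝ) + 1 := Nat.lt_floor_add_one u
    have h3 : ((⌊u⌋₊ : ℝ)) + 1 ≤ ((2:ℝ))^(Nat.log 2 ⌊u⌋₊ + 1) := by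
      have : (⌊u⌋₊ + 1 : ℕ) ≤ 2^(Nat.log 2 ⌊u⌋₊ + 1) := h1
      exact_mod_cast this
    have : u < (2:ℝ)^(sidx d L y + 1) := by
      rw [sidx]; exact lt_of_lt_of_le h2 h3
    calc max (nrm d y) L = u * L := by rw [hu]; field_simp
      _ < (2:ℝ)^(sidx d L y + 1) * L := by nlinarith

lemma master {L : ℝ} (hL : 1 ≤ L) (s : Finset (Fin d → ℤ)) (g : (Fin d → ℤ) → ℝ)
    (c : ℕ → ℝ) (hc : ∀ j, 0 ≤ c j)
    (hb : ∀ y ∈ s, g y ≠ 0 → g y ≤ c (sidx d L y)) :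
    ∃ T : Finset ℕ, (∀ j ∈ T, ∃ y ∈ s, g y ≠ 0 ∧ sidx d L y = j) ∧
      ∑ y ∈ s, g y ≤ ∑ j ∈ T, (10*L)^d * ((2:ℝ)^j)^d * c j := by
  classical
  have hL0 : (0:ℝ) < L := by linarith
  set s' := s.filter (fun y => g y ≠ 0) with hs'
  set T := s'.image (sidx d L) with hT
  refine ⟨T, ?_, ?_⟩
  · intro j hj
    rw [hT, Finset.mem_image] at hj
    obtain ⟨y, hy, hyj⟩ := hj
    rw [hs', Finset.mem_filter] at hy
    exact ⟨y, hy.1, hy.2, hyj⟩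
  · have hsum : ∑ y ∈ s, g y = ∑ y ∈ s', g y := (Finset.sum_filter_ne_zero s).symm
    have hfw := Finset.sum_fiberwise_of_maps_to (s := s') (t := T) (g := sidx d L)
      (fun y hy => Finset.mem_image_of_mem _ hy) g
    rw [hsum, ← hfw]
    apply Finset.sum_le_sum
    intro j hj
    have hfib : ∀ y ∈ s'.filter (fun y => sidx d L y = j), g y ≤ c j := by
      intro y hy
      rw [Finset.mem_filter] at hy
      obtain ⟨hy1, hy2⟩ := hy
      rw [hs', Finset.mem_filter] at hy1
      simpa [hy2] using hb y hy1.1 hy1.2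
    calc ∑ y ∈ s'.filter (fun y => sidx d L y = j), g y
        ≤ (s'.filter (fun y => sidx d L y = j)).card • c j :=
          Finset.sum_le_card_nsmul _ _ _ hfib
      _ = ((s'.filter (fun y => sidx d L y = j)).card : ℝ) * c j := by
          rw [nsmul_eq_mul]
      _ ≤ (10*L)^d * ((2:ℝ)^j)^d * c j := by
          apply mul_le_mul_of_nonneg_right _ (hc j)
          have hsub : s'.filter (fun y => sidx d L y = j) ⊆
              s.filter (fun y => nrm d y ≤ (2:ℝ)^(j+1) * L) := by
            intro y hy
            rw [Finset.mem_filter] at hy ⊢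
            obtain ⟨hy1, hy2⟩ := hy
            rw [hs', Finset.mem_filter] at hy1
            refine ⟨hy1.1, ?_⟩
            have := (sidx_spec hL y).2
            rw [hy2] at this
            exact le_of_lt (lt_of_le_of_lt (le_max_left _ _) this)
          calc ((s'.filter (fun y => sidx d L y = j)).card : ℝ)
              ≤ ((s.filter (fun y => nrm d y ≤ (2:ℝ)^(j+1) * L)).card : ℝ) := by
                exact_mod_cast Finset.card_le_card hsub
            _ ≤ (5 * ((2:ℝ)^(j+1) * L))^d := card_nrm_le s _ (by
                have : (1:ℝ) ≤ (2:ℝ)^(j+1) := one_le_pow₀ (by norm_num)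
                nlinarith)
            _ = (10*L)^d * ((2:ℝ)^j)^d := by
                rw [← mul_pow]; ring_nf
  
lemma geom_finset (T : Finset ℕ) (r : ℝ) (h0 : 0 ≤ r) (h1 : r < 1) (J : ℕ)
    (hJ : ∀ j ∈ T, J ≤ j) : ∑ j ∈ T, r^j ≤ r^J / (1 - r) := by
  classical
  rcases T.eq_empty_or_nonempty with rfl | hne
  · simp only [Finset.sum_empty]
    apply div_nonneg (pow_nonneg h0 J) (by linarith)
  · have hsub : T ⊆ Finset.Ico J (T.max' hne + 1) := by
      intro j hj
      rw [Finset.mem_Ico]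
      exact ⟨hJ j hj, Nat.lt_succ_of_le (Finset.le_max' T j hj)⟩
    have hJle : J ≤ T.max' hne + 1 := le_trans (hJ _ (T.max'_mem hne)) (Nat.le_succ _)
    calc ∑ j ∈ T, r^j ≤ ∑ j ∈ Finset.Ico J (T.max' hne + 1), r^j :=
          Finset.sum_le_sum_of_subset_of_nonneg hsub (fun j _ _ => pow_nonneg h0 j)
      _ = (r^(T.max' hne + 1) - r^J) / (r - 1) := geom_sum_Ico (by linarith) hJle
      _ = (r^J - r^(T.max' hne + 1)) / (1 - r) := by
          rw [div_eq_div_iff (by linarith : r - 1 ≠ 0) (by linarith : (1:ℝ) - r ≠ 0)]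
          ring
      _ ≤ r^J / (1 - r) := by
          apply div_le_div_of_nonneg_right _ (by linarith)
          · nlinarith [pow_nonneg h0 (T.max' hne + 1)]

lemma one_add_mul_log_le {a ε : ℝ} (ha : 0 ≤ a) (hε : 0 < ε) {t : ℝ} (ht : 1 ≤ t) :
    1 + a * Real.log t ≤ (1 + a/ε) * t ^ ε := by
  have h1 : Real.log t ≤ t ^ ε / ε := Real.log_le_rpow_div (by linarith) hε
  have h2 : (1:ℝ) ≤ t ^ ε := Real.one_le_rpow ht hε.le
  have h3 : a * Real.log t ≤ a * (t ^ ε / ε) := mul_le_mul_of_nonneg_left h1 ha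
  have h4 : a * (t ^ ε / ε) = a / ε * t ^ ε := by ring
  have h5 : (1 + a/ε) * t ^ ε = t ^ ε + a/ε * t ^ ε := by ring
  linarith




lemma hRL2 {L : ℝ} (hL : 1 ≤ L) {x : Fin d → ℤ} (hx : 2*L ≤ nrm d x) :
    (2:ℝ) ≤ nrm d x / L := by
  rw [le_div_iff₀ (by linarith)]; linarith

lemma veeX_eq {L : ℝ} (hL : 1 ≤ L) {x : Fin d → ℤ} (hx : 2*L ≤ nrm d x) :
    vee (nrm d x) L = π/2 * nrm d x := by
  rw [vee, max_eq_left (by linarith)]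

lemma veeXL_eq {L : ℝ} (hL : 1 ≤ L) {x : Fin d → ℤ} (hx : 2*L ≤ nrm d x) :
    vee (nrm d x / L) 1 = π/2 * (nrm d x / L) := by
  rw [vee, max_eq_left]
  linarith [hRL2 hL hx]

lemma ellx_ge {L : ℝ} (hL : 1 ≤ L) {x : Fin d → ℤ} (hx : 2*L ≤ nrm d x) :
    Real.log π ≤ Real.log (vee (nrm d x / L) 1) := by
  apply Real.log_le_log Real.pi_pos
  rw [veeXL_eq hL hx]
  have := hRL2 hL hx
  nlinarith [Real.pi_pos]

lemma ellx_gt_one {L : ℝ} (hL : 1 ≤ L) {x : Fin d → ℤ} (hx : 2*L ≤ nrm d x) :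
    1 < Real.log (vee (nrm d x / L) 1) :=
  lt_of_lt_of_le log_pi_gt_one (ellx_ge hL hx)

lemma c0_pos : 0 < Real.log (Real.log π) := Real.log_pos log_pi_gt_one

lemma loglog_ge {L : ℝ} (hL : 1 ≤ L) {x : Fin d → ℤ} (hx : 2*L ≤ nrm d x) :
    Real.log (Real.log π) ≤ Real.log (Real.log (vee (nrm d x / L) 1)) :=
  Real.log_le_log (lt_of_lt_of_le one_pos (le_of_lt log_pi_gt_one)) (ellx_ge hL hx)

/-- comparability of log-factor for points of norm at least `|x|/2` -/
lemma LB {L : ℝ} (hL : 1 ≤ L) {x : Fin d → ℤ} (hx : 2*L ≤ nrm d x)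
    {w : Fin d → ℤ} (hw : nrm d x ≤ 2 * nrm d w) :
    (1 - Real.log 2 / Real.log π) * Real.log (vee (nrm d x / L) 1)
      ≤ Real.log (vee (nrm d w / L) 1) := by
  have hL0 : (0:ℝ) < L := by linarith
  have hx0 : (0:ℝ) < nrm d x := by linarith
  have h1 : vee (nrm d x / L) 1 / 2 ≤ vee (nrm d w / L) 1 := by
    rw [veeXL_eq hL hx, vee]
    have h2 : nrm d x / (2*L) ≤ max (nrm d w / L) 1 := by
      apply le_trans _ (le_max_left _ _)
      rw [div_le_div_iff₀ (by linarith) hL0]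
      nlinarith [hL0, hw]
    have hpi := pi_half_pos
    calc π/2 * (nrm d x / L) / 2 = π/2 * (nrm d x / (2*L)) := by ring
      _ ≤ π/2 * max (nrm d w / L) 1 := by nlinarith
  have h3 : Real.log (vee (nrm d x / L) 1) - Real.log 2 ≤ Real.log (vee (nrm d w / L) 1) := by
    have := Real.log_le_log (div_pos (vee_one_pos _) two_pos) h1
    rw [Real.log_div (ne_of_gt (vee_one_pos _)) (by norm_num)] at this
    linarith
  have hge : Real.log π ≤ Real.log (vee (nrm d x / L) 1) := ellx_ge hL hx
  have hπ1 : (1:ℝ) < Real.log π := log_pi_gt_one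
  have key : Real.log 2 / Real.log π * Real.log (vee (nrm d x / L) 1) ≥ Real.log 2 := by
    rw [ge_iff_le, div_mul_eq_mul_div, le_div_iff₀ (by linarith)]
    have h2pos : (0:ℝ) < Real.log 2 := Real.log_pos (by norm_num)
    nlinarith
  linarith

lemma LB_pos : 0 < 1 - Real.log 2 / Real.log π := by
  have h1 : Real.log 2 < Real.log π := Real.log_lt_log (by norm_num) (by linarith [Real.pi_gt_three])
  have := log_pi_gt_one
  rw [sub_pos, div_lt_one (by linarith)]
  exact h1

lemma rpow_neg_anti {x y a : ℝ} (hx : 0 < x) (hxy : x ≤ y) (ha : 0 ≤ a) :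
    y ^ (-a) ≤ x ^ (-a) := Real.rpow_le_rpow_of_nonpos hx hxy (by linarith)

/-- core dyadic estimate with log weight, exponent `d` -/
lemma core1 (hd : 1 ≤ d) {β : ℝ} (hβ0 : 0 ≤ β) (hβ1 : β ≤ 1) :
    ∃ C : ℝ, 0 < C ∧ ∀ L : ℝ, 1 ≤ L → ∀ x : Fin d → ℤ, 2*L ≤ nrm d x →
      ∀ s : Finset (Fin d → ℤ), (∀ z ∈ s, 2 * nrm d z ≤ nrm d x) →
      ∑ z ∈ s, vee (nrm d z) L ^ (-(d:ℝ)) * Real.log (vee (nrm d z / L) 1) ^ (-β)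
        ≤ C * Real.log (vee (nrm d x / L) 1) ^ (1-β) *
            Real.log (Real.log (vee (nrm d x / L) 1)) := by
  classical
  set l0 := Real.log (π/2) with hl0def
  set c₀ := Real.log (Real.log π) with hc0def
  have hl2 : (0:ℝ) < Real.log 2 := Real.log_pos (by norm_num)
  have hl2' : Real.log 2 < 1 := by
    rw [← Real.log_exp 1]
    exact Real.log_lt_log (by norm_num) (by nlinarith [Real.exp_one_gt_d9])
  set Kc : ℝ := 1 + (1 - Real.log (Real.log 2)) / c₀ with hKc
  have hKc_pos : 0 < Kc := by
    have h1 : Real.log (Real.log 2) < 0 := Real.log_neg hl2 hl2'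
    have h2 : 0 < (1 - Real.log (Real.log 2)) / c₀ := div_pos (by linarith) c0_pos
    rw [hKc]
    linarith
  have hCpos : 0 < (20/π)^d * (l0⁻¹ * c₀⁻¹ + (Real.log 2)⁻¹ * ((Real.log 2)⁻¹ * Kc)) := by
    apply mul_pos (by positivity)
    exact add_pos (mul_pos (inv_pos.mpr l0_pos) (inv_pos.mpr c0_pos))
      (mul_pos (inv_pos.mpr hl2) (mul_pos (inv_pos.mpr hl2) hKc_pos))
  refine ⟨(20/π)^d * (l0⁻¹ * c₀⁻¹ + (Real.log 2)⁻¹ * ((Real.log 2)⁻¹ * Kc)),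
    hCpos, ?_⟩
  intro L hL x hx s hs
  have hL0 : (0:ℝ) < L := by linarith
  set ℓ := Real.log (vee (nrm d x / L) 1) with hldef
  set lℓ := Real.log ℓ with hlldef
  have hℓ1 : 1 < ℓ := ellx_gt_one hL hx
  have hlℓ : c₀ ≤ lℓ := loglog_ge hL hx
  have hlℓ0 : 0 < lℓ := lt_of_lt_of_le c0_pos hlℓ
  have hℓpow1 : (1:ℝ) ≤ ℓ ^ (1-β) := Real.one_le_rpow hℓ1.le (by linarith)
  -- the dyadic cost function
  set w : ℕ → ℝ := fun j => if j = 0 then l0 ^ (-β) else ((j:ℝ) * Real.log 2) ^ (-β) with hw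
  have hwpos : ∀ j, 0 ≤ w j := by
    intro j
    rw [hw]
    dsimp only
    split
    · exact Real.rpow_nonneg l0_pos.le _
    · exact Real.rpow_nonneg (mul_nonneg (Nat.cast_nonneg _) hl2.le) _
  set c : ℕ → ℝ := fun j => ((π/2) * ((2:ℝ)^j * L)) ^ (-(d:ℝ)) * w j with hc
  have hcpos : ∀ j, 0 ≤ c j := fun j => mul_nonneg (Real.rpow_nonneg (by positivity) _) (hwpos j)
  have hpt : ∀ z ∈ s, vee (nrm d z) L ^ (-(d:ℝ)) * Real.log (vee (nrm d z / L) 1) ^ (-β) ≠ 0 →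
      vee (nrm d z) L ^ (-(d:ℝ)) * Real.log (vee (nrm d z / L) 1) ^ (-β) ≤ c (sidx d L z) := by
    intro z _ _
    set j := sidx d L z with hj
    have hspec := sidx_spec hL z
    have hvz : (π/2) * ((2:ℝ)^j * L) ≤ vee (nrm d z) L := by
      rw [vee]
      nlinarith [hspec.1, pi_half_pos]
    have hbase_pos : (0:ℝ) < (π/2) * ((2:ℝ)^j * L) := by positivity
    have h1 : vee (nrm d z) L ^ (-(d:ℝ)) ≤ ((π/2) * ((2:ℝ)^j * L)) ^ (-(d:ℝ)) :=
      rpow_neg_anti hbase_pos hvz (by positivity)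
    have h2 : Real.log (vee (nrm d z / L) 1) ^ (-β) ≤ w j := by
      rw [hw]
      dsimp only
      split
      · -- j = 0 : use log ≥ l0
        apply rpow_neg_anti l0_pos (log_vee_ge _) hβ0
      · -- j ≥ 1 : log ≥ j log 2
        rename_i hj0
        have hj1 : 1 ≤ j := Nat.one_le_iff_ne_zero.mpr hj0
        have hlog : (j:ℝ) * Real.log 2 ≤ Real.log (vee (nrm d z / L) 1) := by
          have h2j : (2:ℝ)^j ≤ vee (nrm d z / L) 1 := by
            rw [vee_div_eq hL0, le_div_iff₀ hL0, vee]
            have hmax0 : 0 < max (nrm d z) L := lt_of_lt_of_le hL0 (le_max_right _ _)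
            nlinarith [hspec.1, pi_half_gt_one, hmax0]
          calc (j:ℝ) * Real.log 2 = Real.log ((2:ℝ)^j) := by
                rw [Real.log_pow]
            _ ≤ _ := Real.log_le_log (by positivity) h2j
        exact rpow_neg_anti (by positivity) hlog hβ0
    calc vee (nrm d z) L ^ (-(d:ℝ)) * Real.log (vee (nrm d z / L) 1) ^ (-β)
        ≤ ((π/2) * ((2:ℝ)^j * L)) ^ (-(d:ℝ)) * w j := by
          apply mul_le_mul h1 h2 (Real.rpow_nonneg (Real.log_nonneg (by
            linarith [vee_one_ge (nrm d z / L), pi_half_gt_one])) _)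
            (Real.rpow_nonneg hbase_pos.le _)
      _ = c j := rfl
  obtain ⟨T, hT, hsum⟩ := master hL s
    (fun z => vee (nrm d z) L ^ (-(d:ℝ)) * Real.log (vee (nrm d z / L) 1) ^ (-β)) c hcpos hpt
  -- simplify the per-shell constant
  have hterm : ∀ j, (10*L)^d * ((2:ℝ)^j)^d * c j = (20/π)^d * w j := by
    intro j
    have hbase_pos : (0:ℝ) < (π/2) * ((2:ℝ)^j * L) := by positivity
    have hrw : ((π/2) * ((2:ℝ)^j * L)) ^ (-(d:ℝ)) = (((π/2) * ((2:ℝ)^j * L))^d)⁻¹ := by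
      rw [Real.rpow_neg hbase_pos.le, ← Real.rpow_natCast ((π/2) * ((2:ℝ)^j * L)) d]
    rw [hc]
    dsimp only
    rw [hrw]
    rw [show (10*L)^d * ((2:ℝ)^j)^d * ((((π/2) * ((2:ℝ)^j * L))^d)⁻¹ * w j)
        = ((10*L) * (2:ℝ)^j / ((π/2) * ((2:ℝ)^j * L)))^d * w j by
      rw [div_pow, mul_pow]; ring]
    congr 2
    field_simp
    ring
  rw [Finset.sum_congr rfl (fun j _ => hterm j)] at hsum
  -- bound the sum of weights
  have hWsum : ∑ j ∈ T, (20/π)^d * w j ≤ (20/π)^d * (l0⁻¹ +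
      (Real.log 2)⁻¹ * ((Real.log 2)⁻¹ * Kc) * (ℓ ^ (1-β) * lℓ)) := by
    rw [← Finset.mul_sum]
    apply mul_le_mul_of_nonneg_left _ (by positivity)
    -- split off j = 0
    set T' := T.erase 0 with hT'
    have hsplit : ∑ j ∈ T, w j ≤ w 0 + ∑ j ∈ T', w j := by
      have hsub : T ⊆ insert 0 T' := by
        intro j hj
        by_cases h : j = 0
        · simp [h]
        · exact Finset.mem_insert_of_mem (Finset.mem_erase.mpr ⟨h, hj⟩)
      calc ∑ j ∈ T, w j ≤ ∑ j ∈ insert 0 T', w j :=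
            Finset.sum_le_sum_of_subset_of_nonneg hsub (fun j _ _ => hwpos j)
        _ = w 0 + ∑ j ∈ T', w j := Finset.sum_insert (Finset.notMem_erase 0 T)
    have hw0 : w 0 ≤ l0⁻¹ := by
      rw [hw]
      dsimp only
      rw [if_pos rfl]
      calc l0 ^ (-β) ≤ l0 ^ (-1 : ℝ) :=
            Real.rpow_le_rpow_of_exponent_ge l0_pos l0_lt_one.le (by linarith)
        _ = l0⁻¹ := by rw [Real.rpow_neg_one]
    rcases T'.eq_empty_or_nonempty with hTe | hTne
    · rw [hTe] at hsplit
      simp only [Finset.sum_empty, add_zero] at hsplit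
      have a1 : (0:ℝ) ≤ (Real.log 2)⁻¹ := (inv_pos.mpr hl2).le
      have a3 : (0:ℝ) ≤ ℓ ^ (1-β) * lℓ :=
        mul_nonneg (Real.rpow_nonneg (by linarith) _) hlℓ0.le
      have hnn : (0:ℝ) ≤ (Real.log 2)⁻¹ * ((Real.log 2)⁻¹ * Kc) * (ℓ ^ (1-β) * lℓ) :=
        mul_nonneg (mul_nonneg a1 (mul_nonneg a1 hKc_pos.le)) a3
      linarith
    · obtain ⟨M, hM_mem, hMmax⟩ : ∃ M, M ∈ T' ∧ ∀ j ∈ T', j ≤ M :=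
        ⟨T'.max' hTne, T'.max'_mem hTne, fun j hj => Finset.le_max' T' j hj⟩
      have hM1 : 1 ≤ M := Nat.one_le_iff_ne_zero.mpr (Finset.mem_erase.mp hM_mem).1
      -- bound on M from the region condition
      have hMbound : (M:ℝ) ≤ ℓ / Real.log 2 := by
        obtain ⟨y, hy, -, hyM⟩ := hT M (Finset.mem_of_mem_erase hM_mem)
        have hspec := sidx_spec hL y
        rw [hyM] at hspec
        have hymax : max (nrm d y) L ≤ nrm d x / 2 := by
          rw [max_le_iff]
          constructor
          · linarith [hs y hy]
          · linarith
        have h2M : (2:ℝ)^M ≤ nrm d x / (2*L) := by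
          rw [le_div_iff₀ (by linarith)]
          nlinarith [hspec.1]
        have hlog2M : (M:ℝ) * Real.log 2 ≤ Real.log (nrm d x / (2*L)) := by
          rw [← Real.log_pow]
          exact Real.log_le_log (by positivity) h2M
        have hx0 : (0:ℝ) < nrm d x := by linarith
        have harg : nrm d x / (2*L) ≤ vee (nrm d x / L) 1 := by
          rw [veeXL_eq hL hx]
          rw [div_le_iff₀ (by linarith : (0:ℝ) < 2*L)]
          have e : π/2*(nrm d x/L)*(2*L) = π * nrm d x := by
            field_simp
          rw [e]
          nlinarith [Real.pi_gt_three, hx0]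
        have : Real.log (nrm d x / (2*L)) ≤ ℓ :=
          Real.log_le_log (by positivity) harg
        rw [le_div_iff₀ hl2]
        linarith
      -- per-term bound on T'
      have hterm' : ∀ j ∈ T', w j ≤ (Real.log 2)⁻¹ * ((M:ℝ) ^ (1-β) * (j:ℝ)⁻¹) := by
        intro j hj
        have hj0 : j ≠ 0 := (Finset.mem_erase.mp hj).1
        have hj1 : (1:ℝ) ≤ (j:ℝ) := by exact_mod_cast Nat.one_le_iff_ne_zero.mpr hj0
        have hjM : (j:ℝ) ≤ (M:ℝ) := by exact_mod_cast hMmax j hj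
        rw [hw]
        dsimp only
        rw [if_neg hj0]
        have h1 : ((j:ℝ) * Real.log 2) ^ (-β) = (j:ℝ) ^ (-β) * (Real.log 2) ^ (-β) :=
          Real.mul_rpow (by linarith) hl2.le
        have h2 : (Real.log 2) ^ (-β) ≤ (Real.log 2)⁻¹ := by
          calc (Real.log 2) ^ (-β) ≤ (Real.log 2) ^ (-1:ℝ) :=
                Real.rpow_le_rpow_of_exponent_ge hl2 hl2'.le (by linarith)
            _ = (Real.log 2)⁻¹ := Real.rpow_neg_one _
        have h3 : (j:ℝ) ^ (-β) ≤ (M:ℝ) ^ (1-β) * (j:ℝ)⁻¹ := by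
          have e1 : (j:ℝ) ^ (-β) = (j:ℝ) ^ (1-β) * (j:ℝ)⁻¹ := by
            rw [← Real.rpow_neg_one (j:ℝ), ← Real.rpow_add (by linarith), show (1-β) + (-1) = -β by ring]
          rw [e1]
          apply mul_le_mul_of_nonneg_right _ (by positivity)
          exact Real.rpow_le_rpow (by linarith) hjM (by linarith)
        calc ((j:ℝ) * Real.log 2) ^ (-β) = (j:ℝ) ^ (-β) * (Real.log 2) ^ (-β) := h1
          _ ≤ ((M:ℝ) ^ (1-β) * (j:ℝ)⁻¹) * (Real.log 2)⁻¹ := by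
              apply mul_le_mul h3 h2 (Real.rpow_nonneg hl2.le _) (by positivity)
          _ = (Real.log 2)⁻¹ * ((M:ℝ) ^ (1-β) * (j:ℝ)⁻¹) := by ring
      have hsum' : ∑ j ∈ T', w j ≤ (Real.log 2)⁻¹ * ((M:ℝ) ^ (1-β) * ∑ j ∈ T', (j:ℝ)⁻¹) := by
        rw [Finset.mul_sum, Finset.mul_sum]
        exact Finset.sum_le_sum (fun j hj => by
          have := hterm' j hj
          calc w j ≤ (Real.log 2)⁻¹ * ((M:ℝ) ^ (1-β) * (j:ℝ)⁻¹) := this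
            _ = (Real.log 2)⁻¹ * ((M:ℝ) ^ (1-β) * (j:ℝ)⁻¹) := rfl)
      -- harmonic bound
      have hharm : ∑ j ∈ T', (j:ℝ)⁻¹ ≤ 1 + Real.log M := by
        have hsub : T' ⊆ Finset.Icc 1 M := by
          intro j hj
          rw [Finset.mem_Icc]
          exact ⟨Nat.one_le_iff_ne_zero.mpr (Finset.mem_erase.mp hj).1, hMmax j hj⟩
        calc ∑ j ∈ T', (j:ℝ)⁻¹ ≤ ∑ j ∈ Finset.Icc 1 M, (j:ℝ)⁻¹ :=
              Finset.sum_le_sum_of_subset_of_nonneg hsub (fun j _ _ => by positivity)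
          _ = ((harmonic M : ℚ) : ℝ) := by
              rw [harmonic_eq_sum_Icc]
              push_cast
              rfl
          _ ≤ 1 + Real.log M := harmonic_le_one_add_log M
      -- combine: M ^ (1-β) ≤ (log 2)⁻¹ ℓ^(1-β), 1 + log M ≤ Kc lℓ
      have hM2 : (M:ℝ) ^ (1-β) ≤ (Real.log 2)⁻¹ * ℓ ^ (1-β) := by
        calc (M:ℝ) ^ (1-β) ≤ (ℓ / Real.log 2) ^ (1-β) :=
              Real.rpow_le_rpow (by positivity) hMbound (by linarith)
          _ = ℓ ^ (1-β) * (Real.log 2) ^ (-(1-β)) := by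
              rw [Real.div_rpow (by linarith) hl2.le, Real.rpow_neg hl2.le, div_eq_mul_inv]
          _ ≤ ℓ ^ (1-β) * (Real.log 2)⁻¹ := by
              apply mul_le_mul_of_nonneg_left _ (by positivity)
              calc (Real.log 2) ^ (-(1-β)) ≤ (Real.log 2) ^ (-1:ℝ) :=
                    Real.rpow_le_rpow_of_exponent_ge hl2 hl2'.le (by linarith)
                _ = (Real.log 2)⁻¹ := Real.rpow_neg_one _
          _ = (Real.log 2)⁻¹ * ℓ ^ (1-β) := by ring
      have hM3 : 1 + Real.log M ≤ Kc * lℓ := by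
        have h1 : Real.log M ≤ Real.log ℓ - Real.log (Real.log 2) := by
          have := Real.log_le_log (by positivity : (0:ℝ) < (M:ℝ)) hMbound
          rwa [Real.log_div (by linarith) hl2.ne'] at this
        have h2 : lℓ / c₀ ≥ 1 := by
          rw [ge_iff_le, le_div_iff₀ c0_pos]
          linarith
        have h3 : 0 < 1 - Real.log (Real.log 2) := by
          have : Real.log (Real.log 2) < 0 := Real.log_neg hl2 hl2'
          linarith
        rw [hKc]
        have h4 : (1 - Real.log (Real.log 2)) ≤ (1 - Real.log (Real.log 2)) / c₀ * lℓ := by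
          rw [div_mul_eq_mul_div, le_div_iff₀ c0_pos]
          nlinarith
        nlinarith [hlℓ0]
      have hharm_pos : (0:ℝ) ≤ ∑ j ∈ T', (j:ℝ)⁻¹ :=
        Finset.sum_nonneg (fun j _ => by positivity)
      have hMp : (0:ℝ) ≤ (M:ℝ) ^ (1-β) := Real.rpow_nonneg (by positivity) _
      have final' : ∑ j ∈ T', w j ≤
          (Real.log 2)⁻¹ * ((Real.log 2)⁻¹ * Kc) * (ℓ ^ (1-β) * lℓ) := by
        have s1 : (M:ℝ) ^ (1-β) * ∑ j ∈ T', (j:ℝ)⁻¹ ≤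
            ((Real.log 2)⁻¹ * ℓ ^ (1-β)) * (Kc * lℓ) := by
          apply mul_le_mul hM2 (le_trans hharm (by
            have : (0:ℝ) ≤ Real.log M := Real.log_nonneg (by exact_mod_cast hM1)
            linarith [hM3])) hharm_pos (by positivity)
        calc ∑ j ∈ T', w j ≤ (Real.log 2)⁻¹ * ((M:ℝ) ^ (1-β) * ∑ j ∈ T', (j:ℝ)⁻¹) := hsum'
          _ ≤ (Real.log 2)⁻¹ * (((Real.log 2)⁻¹ * ℓ ^ (1-β)) * (Kc * lℓ)) := by
              apply mul_le_mul_of_nonneg_left s1 (by positivity)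
          _ = (Real.log 2)⁻¹ * ((Real.log 2)⁻¹ * Kc) * (ℓ ^ (1-β) * lℓ) := by
              ring
      linarith [hsplit, hw0, final']
  -- conclude
  have target_eq : (20/π)^d * (l0⁻¹ * c₀⁻¹ + (Real.log 2)⁻¹ * ((Real.log 2)⁻¹ * Kc))
      * ℓ ^ (1-β) * lℓ ≥ (20/π)^d * (l0⁻¹ +
      (Real.log 2)⁻¹ * ((Real.log 2)⁻¹ * Kc) * (ℓ ^ (1-β) * lℓ)) := by
    have h1 : l0⁻¹ ≤ l0⁻¹ * c₀⁻¹ * (ℓ ^ (1-β) * lℓ) := by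
      have e1 : (1:ℝ) ≤ c₀⁻¹ * lℓ := by
        rw [← inv_mul_cancel₀ (ne_of_gt c0_pos)]
        exact mul_le_mul_of_nonneg_left hlℓ (inv_pos.mpr c0_pos).le
      have e2 : (1:ℝ) ≤ c₀⁻¹ * (ℓ ^ (1-β) * lℓ) := by
        calc (1:ℝ) ≤ c₀⁻¹ * lℓ := e1
          _ ≤ c₀⁻¹ * (ℓ ^ (1-β) * lℓ) := by
              apply mul_le_mul_of_nonneg_left _ (inv_pos.mpr c0_pos).le
              nlinarith [hlℓ0, hℓpow1]
      calc l0⁻¹ = l0⁻¹ * 1 := by ring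
        _ ≤ l0⁻¹ * (c₀⁻¹ * (ℓ ^ (1-β) * lℓ)) := by
            apply mul_le_mul_of_nonneg_left e2 (inv_pos.mpr l0_pos).le
        _ = l0⁻¹ * c₀⁻¹ * (ℓ ^ (1-β) * lℓ) := by ring
    have hp : (0:ℝ) < (20/π)^d := by positivity
    nlinarith [hp]
  calc ∑ z ∈ s, vee (nrm d z) L ^ (-(d:ℝ)) * Real.log (vee (nrm d z / L) 1) ^ (-β)
      ≤ ∑ j ∈ T, (20/π)^d * w j := hsum
    _ ≤ (20/π)^d * (l0⁻¹ + (Real.log 2)⁻¹ * ((Real.log 2)⁻¹ * Kc) * (ℓ ^ (1-β) * lℓ)) := hWsum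
    _ ≤ (20/π)^d * (l0⁻¹ * c₀⁻¹ + (Real.log 2)⁻¹ * ((Real.log 2)⁻¹ * Kc)) * ℓ ^ (1-β) * lℓ := target_eq


lemma pow_eq_rpow (x : ℝ) (hx : 0 ≤ x) (n : ℕ) : x ^ n = x ^ (n:ℝ) :=
  (Real.rpow_natCast x n).symm

lemma card_T_le {L : ℝ} (hL : 1 ≤ L) {x : Fin d → ℤ} (hx : 2*L ≤ nrm d x)
    (T : Finset ℕ) (hwit : ∀ j ∈ T, (2:ℝ)^j * L ≤ nrm d x / 2) :
    (T.card : ℝ) ≤ (1 + 1/Real.log 2) * Real.log (vee (nrm d x / L) 1) := by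
  have hL0 : (0:ℝ) < L := by linarith
  have hl2 : (0:ℝ) < Real.log 2 := Real.log_pos (by norm_num)
  set ℓ := Real.log (vee (nrm d x / L) 1) with hldef
  have hℓ1 : 1 < ℓ := ellx_gt_one hL hx
  rcases T.eq_empty_or_nonempty with rfl | hTne
  · simp
    nlinarith [inv_pos.mpr hl2, hℓ1]
  · set M := T.max' hTne with hM
    have hMT : M ∈ T := T.max'_mem hTne
    have hMbound : (M:ℝ) ≤ ℓ / Real.log 2 := by
      have h2M : (2:ℝ)^M ≤ nrm d x / (2*L) := by
        have := hwit M hMT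
        rw [le_div_iff₀ (by linarith : (0:ℝ) < 2*L)]
        nlinarith
      have hlog2M : (M:ℝ) * Real.log 2 ≤ Real.log (nrm d x / (2*L)) := by
        rw [← Real.log_pow]
        exact Real.log_le_log (by positivity) h2M
      have hx0 : (0:ℝ) < nrm d x := by linarith
      have harg : nrm d x / (2*L) ≤ vee (nrm d x / L) 1 := by
        rw [veeXL_eq hL hx]
        rw [div_le_iff₀ (by linarith : (0:ℝ) < 2*L)]
        have e : π/2*(nrm d x/L)*(2*L) = π * nrm d x := by
          field_simp
        rw [e]
        nlinarith [Real.pi_gt_three, hx0]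
      have h3 : Real.log (nrm d x / (2*L)) ≤ ℓ :=
        Real.log_le_log (by positivity) harg
      rw [le_div_iff₀ hl2]
      linarith
    have hcard : T.card ≤ M + 1 := by
      have : T ⊆ Finset.range (M+1) := by
        intro j hj
        rw [Finset.mem_range]
        exact Nat.lt_succ_of_le (Finset.le_max' T j hj)
      calc T.card ≤ (Finset.range (M+1)).card := Finset.card_le_card this
        _ = M + 1 := Finset.card_range _
    have : (T.card : ℝ) ≤ (M:ℝ) + 1 := by exact_mod_cast hcard
    have h4 : (M:ℝ) + 1 ≤ ℓ/Real.log 2 + ℓ := by linarith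
    have h5 : ℓ/Real.log 2 + ℓ = (1 + 1/Real.log 2) * ℓ := by ring
    linarith

lemma core2 (hd : 1 ≤ d) {β : ℝ} (hβ0 : 0 < β) (hβd : β < d) :
    ∃ C : ℝ, 0 < C ∧ ∀ L : ℝ, 1 ≤ L → ∀ x : Fin d → ℤ, 2*L ≤ nrm d x →
      ∀ s : Finset (Fin d → ℤ), (∀ z ∈ s, 2 * nrm d z ≤ nrm d x) →
      ∑ z ∈ s, vee (nrm d z) L ^ (-β)
        ≤ C * Real.log (vee (nrm d x / L) 1) * vee (nrm d x) L ^ ((d:ℝ) - β) := by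
  have hl2 : (0:ℝ) < Real.log 2 := Real.log_pos (by norm_num)
  refine ⟨(10:ℝ)^d * (1 + 1/Real.log 2), by positivity, ?_⟩
  intro L hL x hx s hs
  have hL0 : (0:ℝ) < L := by linarith
  have hx0 : (0:ℝ) < nrm d x := by linarith
  set ℓ := Real.log (vee (nrm d x / L) 1) with hldef
  have hℓ1 : 1 < ℓ := ellx_gt_one hL hx
  set c : ℕ → ℝ := fun j => ((π/2) * ((2:ℝ)^j * L)) ^ (-β) with hc
  have hcpos : ∀ j, 0 ≤ c j := fun j => Real.rpow_nonneg (by positivity) _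
  have hpt : ∀ z ∈ s, vee (nrm d z) L ^ (-β) ≠ 0 →
      vee (nrm d z) L ^ (-β) ≤ c (sidx d L z) := by
    intro z _ _
    have hspec := sidx_spec hL z
    have hvz : (π/2) * ((2:ℝ)^(sidx d L z) * L) ≤ vee (nrm d z) L := by
      rw [vee]
      nlinarith [hspec.1, pi_half_pos]
    exact rpow_neg_anti (by positivity) hvz hβ0.le
  obtain ⟨T, hT, hsum⟩ := master hL s (fun z => vee (nrm d z) L ^ (-β)) c hcpos hpt
  have hwit : ∀ j ∈ T, (2:ℝ)^j * L ≤ nrm d x / 2 := by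
    intro j hj
    obtain ⟨y, hy, -, hyj⟩ := hT j hj
    have hspec := sidx_spec hL y
    rw [hyj] at hspec
    have : max (nrm d y) L ≤ nrm d x / 2 := by
      rw [max_le_iff]
      exact ⟨by linarith [hs y hy], by linarith⟩
    linarith [hspec.1]
  -- bound each term of the master sum
  have hterm : ∀ j ∈ T, (10*L)^d * ((2:ℝ)^j)^d * c j ≤ (10:ℝ)^d * vee (nrm d x) L ^ ((d:ℝ)-β) := by
    intro j hj
    have h2j : (0:ℝ) < (2:ℝ)^j := by positivity
    have hb1 : ((π/2) * ((2:ℝ)^j * L)) ^ (-β) ≤ ((2:ℝ)^j * L) ^ (-β) := by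
      apply rpow_neg_anti (by positivity) _ hβ0.le
      nlinarith [pi_half_gt_one, mul_pos h2j hL0]
    have e1 : ((2:ℝ)^j * L) ^ (-β) = ((2:ℝ)^j)^(-β) * L^(-β) :=
      Real.mul_rpow h2j.le hL0.le
    have step1 : (10*L)^d * ((2:ℝ)^j)^d * c j ≤
        (10:ℝ)^d * (L^(d:ℝ) * L^(-β)) * (((2:ℝ)^j)^((d:ℝ)) * ((2:ℝ)^j)^(-β)) := by
      rw [hc]
      dsimp only
      calc (10*L)^d * ((2:ℝ)^j)^d * ((π/2) * ((2:ℝ)^j * L)) ^ (-β)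
          ≤ (10*L)^d * ((2:ℝ)^j)^d * (((2:ℝ)^j)^(-β) * L^(-β)) := by
            apply mul_le_mul_of_nonneg_left _ (by positivity)
            rw [← e1]
            exact hb1
        _ = (10:ℝ)^d * (L^(d:ℝ) * L^(-β)) * (((2:ℝ)^j)^((d:ℝ)) * ((2:ℝ)^j)^(-β)) := by
            rw [mul_pow, ← pow_eq_rpow L hL0.le, ← pow_eq_rpow ((2:ℝ)^j) h2j.le]
            ring
    have e2 : L^(d:ℝ) * L^(-β) = L^((d:ℝ)-β) := by
      rw [← Real.rpow_add hL0]
      ring_nf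
    have e3 : ((2:ℝ)^j)^((d:ℝ)) * ((2:ℝ)^j)^(-β) = ((2:ℝ)^j)^((d:ℝ)-β) := by
      rw [← Real.rpow_add h2j]
      ring_nf
    have hdb : (0:ℝ) ≤ (d:ℝ) - β := by linarith
    have h2jb : ((2:ℝ)^j)^((d:ℝ)-β) ≤ (nrm d x / (2*L))^((d:ℝ)-β) := by
      apply Real.rpow_le_rpow h2j.le _ hdb
      have := hwit j hj
      rw [le_div_iff₀ (by linarith : (0:ℝ) < 2*L)]
      nlinarith
    have hfinal : L^((d:ℝ)-β) * (nrm d x / (2*L))^((d:ℝ)-β) ≤ vee (nrm d x) L ^ ((d:ℝ)-β) := by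
      rw [← Real.mul_rpow hL0.le (by positivity)]
      apply Real.rpow_le_rpow (by positivity) _ hdb
      rw [veeX_eq hL hx]
      have e4 : L * (nrm d x / (2*L)) = nrm d x / 2 := by
        field_simp
      rw [e4]
      nlinarith [pi_half_gt_one, hx0]
    calc (10*L)^d * ((2:ℝ)^j)^d * c j
        ≤ (10:ℝ)^d * (L^(d:ℝ) * L^(-β)) * (((2:ℝ)^j)^((d:ℝ)) * ((2:ℝ)^j)^(-β)) := step1
      _ = (10:ℝ)^d * (L^((d:ℝ)-β) * ((2:ℝ)^j)^((d:ℝ)-β)) := by rw [e2, e3]; ring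
      _ ≤ (10:ℝ)^d * (L^((d:ℝ)-β) * (nrm d x / (2*L))^((d:ℝ)-β)) := by
          apply mul_le_mul_of_nonneg_left _ (by positivity)
          apply mul_le_mul_of_nonneg_left h2jb (Real.rpow_nonneg hL0.le _)
      _ ≤ (10:ℝ)^d * vee (nrm d x) L ^ ((d:ℝ)-β) := by
          apply mul_le_mul_of_nonneg_left hfinal (by positivity)
  have hcard := card_T_le hL hx T hwit
  have hveep : (0:ℝ) ≤ vee (nrm d x) L ^ ((d:ℝ)-β) := Real.rpow_nonneg (vee_pos hL0 _).le _
  calc ∑ z ∈ s, vee (nrm d z) L ^ (-β) ≤ ∑ j ∈ T, (10*L)^d * ((2:ℝ)^j)^d * c j := hsum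
    _ ≤ ∑ j ∈ T, (10:ℝ)^d * vee (nrm d x) L ^ ((d:ℝ)-β) := Finset.sum_le_sum hterm
    _ = (T.card : ℝ) * ((10:ℝ)^d * vee (nrm d x) L ^ ((d:ℝ)-β)) := by
        rw [Finset.sum_const, nsmul_eq_mul]
    _ ≤ ((1 + 1/Real.log 2) * ℓ) * ((10:ℝ)^d * vee (nrm d x) L ^ ((d:ℝ)-β)) := by
        apply mul_le_mul_of_nonneg_right hcard (by positivity)
    _ = (10:ℝ)^d * (1 + 1/Real.log 2) * ℓ * vee (nrm d x) L ^ ((d:ℝ)-β) := by ring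

lemma core3 (hd : 1 ≤ d) {β : ℝ} (hβ0 : 0 < β) :
    ∃ C : ℝ, 0 < C ∧ ∀ L : ℝ, 1 ≤ L → ∀ x : Fin d → ℤ, 2*L ≤ nrm d x →
      ∀ s : Finset (Fin d → ℤ), (∀ z ∈ s, nrm d x < 2 * nrm d z) →
      ∑ z ∈ s, vee (nrm d z) L ^ (-(d:ℝ) - β)
        ≤ C * vee (nrm d x) L ^ (-β) := by
  set r : ℝ := (2:ℝ) ^ (-β) with hr
  have hr0 : 0 < r := Real.rpow_pos_of_pos (by norm_num) _
  have hr1 : r < 1 := Real.rpow_lt_one_of_one_lt_of_neg (by norm_num) (by linarith)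
  refine ⟨(10:ℝ)^d * ((4:ℝ)^β * (π/2)^β / (1 - r)), ?_, ?_⟩
  · apply mul_pos (by positivity)
    apply div_pos _ (by linarith)
    exact mul_pos (Real.rpow_pos_of_pos (by norm_num) _) (Real.rpow_pos_of_pos pi_half_pos _)
  intro L hL x hx s hs
  have hL0 : (0:ℝ) < L := by linarith
  have hx0 : (0:ℝ) < nrm d x := by linarith
  set c : ℕ → ℝ := fun j => ((π/2) * ((2:ℝ)^j * L)) ^ (-(d:ℝ) - β) with hc
  have hcpos : ∀ j, 0 ≤ c j := fun j => Real.rpow_nonneg (by positivity) _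
  have hpt : ∀ z ∈ s, vee (nrm d z) L ^ (-(d:ℝ) - β) ≠ 0 →
      vee (nrm d z) L ^ (-(d:ℝ) - β) ≤ c (sidx d L z) := by
    intro z _ _
    have hspec := sidx_spec hL z
    have hvz : (π/2) * ((2:ℝ)^(sidx d L z) * L) ≤ vee (nrm d z) L := by
      rw [vee]
      nlinarith [hspec.1, pi_half_pos]
    have := Real.rpow_le_rpow_of_nonpos (by positivity) hvz (by linarith : -(d:ℝ) - β ≤ 0)
    exact this
  obtain ⟨T, hT, hsum⟩ := master hL s (fun z => vee (nrm d z) L ^ (-(d:ℝ) - β)) c hcpos hpt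
  -- each term equals 10^d * L^(-β) * r^j, roughly
  have hterm : ∀ j, (10*L)^d * ((2:ℝ)^j)^d * c j ≤ (10:ℝ)^d * L^(-β) * r^j := by
    intro j
    have h2j : (0:ℝ) < (2:ℝ)^j := by positivity
    have hb1 : ((π/2) * ((2:ℝ)^j * L)) ^ (-(d:ℝ)-β) ≤ ((2:ℝ)^j * L) ^ (-(d:ℝ)-β) := by
      apply Real.rpow_le_rpow_of_nonpos (by positivity) _ (by linarith : -(d:ℝ) - β ≤ 0)
      nlinarith [pi_half_gt_one, mul_pos h2j hL0]
    have e1 : ((2:ℝ)^j * L) ^ (-(d:ℝ)-β) = ((2:ℝ)^j)^(-(d:ℝ)-β) * L^(-(d:ℝ)-β) :=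
      Real.mul_rpow h2j.le hL0.le
    have e2 : ((2:ℝ)^j)^d * ((2:ℝ)^j)^(-(d:ℝ)-β) = r^j := by
      rw [pow_eq_rpow ((2:ℝ)^j) h2j.le d, ← Real.rpow_add h2j,
        show (d:ℝ) + (-(d:ℝ) - β) = -β from by ring, hr]
      rw [← Real.rpow_natCast ((2:ℝ)^(-β)) j, ← Real.rpow_natCast (2:ℝ) j,
        ← Real.rpow_mul (by norm_num), ← Real.rpow_mul (by norm_num), mul_comm]
    have e3 : L^d * L^(-(d:ℝ)-β) = L^(-β) := by
      rw [pow_eq_rpow L hL0.le d, ← Real.rpow_add hL0,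
        show (d:ℝ) + (-(d:ℝ) - β) = -β from by ring]
    calc (10*L)^d * ((2:ℝ)^j)^d * c j
        ≤ (10*L)^d * ((2:ℝ)^j)^d * (((2:ℝ)^j)^(-(d:ℝ)-β) * L^(-(d:ℝ)-β)) := by
          apply mul_le_mul_of_nonneg_left _ (by positivity)
          rw [← e1]
          exact hb1
      _ = (10:ℝ)^d * (L^d * L^(-(d:ℝ)-β)) * (((2:ℝ)^j)^d * ((2:ℝ)^j)^(-(d:ℝ)-β)) := by
          rw [mul_pow]
          ring
      _ = (10:ℝ)^d * L^(-β) * r^j := by rw [e2, e3]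
  -- all shells are in the tail
  set J₀ := Nat.log 2 ⌊nrm d x / (2*L)⌋₊ with hJ₀
  have hu1 : (1:ℝ) ≤ nrm d x / (2*L) := by
    rw [le_div_iff₀ (by linarith : (0:ℝ) < 2*L)]
    linarith
  have hfl1 : 1 ≤ ⌊nrm d x / (2*L)⌋₊ := Nat.one_le_iff_ne_zero.mpr (by
    intro h
    have := Nat.floor_eq_zero.mp h
    linarith)
  have hJ₀up : nrm d x / (2*L) < (2:ℝ)^(J₀+1) := by
    have h1 : ⌊nrm d x / (2*L)⌋₊ < 2^(J₀+1) := Nat.lt_pow_succ_log_self (by omega) _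
    have h2 : nrm d x / (2*L) < (⌊nrm d x / (2*L)⌋₊ : ℝ) + 1 := Nat.lt_floor_add_one _
    have h3 : ((⌊nrm d x / (2*L)⌋₊ : ℝ)) + 1 ≤ (2:ℝ)^(J₀+1) := by
      have : (⌊nrm d x / (2*L)⌋₊ + 1 : ℕ) ≤ 2^(J₀+1) := h1
      exact_mod_cast this
    linarith
  have hJ₀lo : (2:ℝ)^J₀ ≤ nrm d x / (2*L) := by
    have h1 : (2:ℕ)^J₀ ≤ ⌊nrm d x / (2*L)⌋₊ := Nat.pow_log_le_self 2 (by omega)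
    calc (2:ℝ)^J₀ = ((2^J₀ : ℕ) : ℝ) := by push_cast; ring
      _ ≤ (⌊nrm d x / (2*L)⌋₊ : ℝ) := by exact_mod_cast h1
      _ ≤ nrm d x / (2*L) := Nat.floor_le (by linarith)
  have hJT : ∀ j ∈ T, J₀ ≤ j := by
    intro j hj
    obtain ⟨y, hy, -, hyj⟩ := hT j hj
    have hspec := sidx_spec hL y
    rw [hyj] at hspec
    have h1 : nrm d x / 2 < (2:ℝ)^(j+1) * L := by
      calc nrm d x / 2 < nrm d y := by linarith [hs y hy]
        _ ≤ max (nrm d y) L := le_max_left _ _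
        _ < (2:ℝ)^(j+1) * L := hspec.2
    have h2 : (2:ℝ)^J₀ < (2:ℝ)^(j+1) := by
      calc (2:ℝ)^J₀ ≤ nrm d x / (2*L) := hJ₀lo
        _ < (2:ℝ)^(j+1) := by
            rw [div_lt_iff₀ (by linarith : (0:ℝ) < 2*L)] at *
            nlinarith [h1]
    have : J₀ < j + 1 := by
      by_contra hcon
      push_neg at hcon
      have : (2:ℝ)^(j+1) ≤ (2:ℝ)^J₀ := pow_le_pow_right₀ (by norm_num) hcon
      linarith
    omega
  have hgeo : ∑ j ∈ T, r^j ≤ r^J₀ / (1-r) := geom_finset T r hr0.le hr1 J₀ hJT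
  have hrJ : r^J₀ ≤ (4:ℝ)^β * (π/2)^β * L^β * vee (nrm d x) L ^ (-β) := by
    have e5 : r^J₀ = ((2:ℝ)^J₀)^(-β) := by
      rw [hr, ← Real.rpow_natCast ((2:ℝ)^(-β)) J₀, ← Real.rpow_natCast (2:ℝ) J₀,
        ← Real.rpow_mul (by norm_num), ← Real.rpow_mul (by norm_num), mul_comm]
    have h2J : nrm d x / (4*L) < (2:ℝ)^J₀ := by
      have : (2:ℝ)^(J₀+1) = 2 * (2:ℝ)^J₀ := by ring
      rw [this] at hJ₀up
      have h4 : nrm d x / (4*L) = (nrm d x / (2*L))/2 := by ring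
      rw [h4]
      linarith
    have hbq : (0:ℝ) < nrm d x / (4*L) := by positivity
    have h6 : ((2:ℝ)^J₀)^(-β) ≤ (nrm d x / (4*L))^(-β) :=
      Real.rpow_le_rpow_of_nonpos hbq h2J.le (by linarith)
    have e6 : (nrm d x / (4*L))^(-β) = (4:ℝ)^β * L^β * (nrm d x)^(-β) := by
      rw [Real.rpow_neg (by positivity), Real.div_rpow hx0.le (by positivity), inv_div,
        Real.mul_rpow (by norm_num) hL0.le, div_eq_mul_inv, ← Real.rpow_neg hx0.le]
    have e7 : (nrm d x)^(-β) = (π/2)^β * vee (nrm d x) L ^ (-β) := by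
      rw [veeX_eq hL hx, Real.mul_rpow pi_half_pos.le hx0.le, ← mul_assoc,
        ← Real.rpow_add pi_half_pos, show β + -β = 0 from by ring, Real.rpow_zero, one_mul]
    calc r^J₀ = ((2:ℝ)^J₀)^(-β) := e5
      _ ≤ (nrm d x / (4*L))^(-β) := h6
      _ = (4:ℝ)^β * L^β * (nrm d x)^(-β) := e6
      _ = (4:ℝ)^β * (π/2)^β * L^β * vee (nrm d x) L ^ (-β) := by rw [e7]; ring
  have hLb : L^(-β) * L^β = 1 := by
    rw [← Real.rpow_add hL0]
    simp
  have hveep : (0:ℝ) ≤ vee (nrm d x) L ^ (-β) := Real.rpow_nonneg (vee_pos hL0 _).le _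
  calc ∑ z ∈ s, vee (nrm d z) L ^ (-(d:ℝ)-β)
      ≤ ∑ j ∈ T, (10*L)^d * ((2:ℝ)^j)^d * c j := hsum
    _ ≤ ∑ j ∈ T, (10:ℝ)^d * L^(-β) * r^j := Finset.sum_le_sum (fun j _ => hterm j)
    _ = (10:ℝ)^d * L^(-β) * ∑ j ∈ T, r^j := by rw [Finset.mul_sum]
    _ ≤ (10:ℝ)^d * L^(-β) * (r^J₀ / (1-r)) := by
        apply mul_le_mul_of_nonneg_left hgeo
        have : (0:ℝ) ≤ L^(-β) := Real.rpow_nonneg hL0.le _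
        positivity
    _ ≤ (10:ℝ)^d * L^(-β) * (((4:ℝ)^β * (π/2)^β * L^β * vee (nrm d x) L ^ (-β)) / (1-r)) := by
        apply mul_le_mul_of_nonneg_left _ (by
          have : (0:ℝ) ≤ L^(-β) := Real.rpow_nonneg hL0.le _
          positivity)
        apply div_le_div_of_nonneg_right hrJ (by linarith)
    _ = (10:ℝ)^d * ((4:ℝ)^β * (π/2)^β / (1 - r)) * vee (nrm d x) L ^ (-β) * (L^(-β) * L^β) := by
        ring
    _ = (10:ℝ)^d * ((4:ℝ)^β * (π/2)^β / (1 - r)) * vee (nrm d x) L ^ (-β) := by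
        rw [hLb, mul_one]

lemma logratio {b₂ : ℝ} (hb₂ : 0 ≤ b₂) {ε : ℝ} (hε : 0 < ε) :
    ∃ K : ℝ, 0 < K ∧ ∀ L : ℝ, 1 ≤ L → ∀ x : Fin d → ℤ, 2*L ≤ nrm d x →
      ∀ y : Fin d → ℤ, 2 * nrm d y ≤ nrm d x →
      Real.log (vee (nrm d y / L) 1) ^ (-b₂) ≤
        K * Real.log (vee (nrm d x / L) 1) ^ (-b₂) *
          (vee (nrm d x) L ^ ε * vee (nrm d y) L ^ (-ε)) := by
  have hm1 : (1:ℝ) ≤ max b₂ 1 := le_max_right _ _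
  have hδ : 0 < ε / max b₂ 1 := div_pos hε (by linarith)
  set δ := ε / max b₂ 1 with hδdef
  set K₁ : ℝ := 1 + (Real.log (π/2))⁻¹ / δ with hK₁
  have hK₁1 : 1 ≤ K₁ := by
    have : 0 < (Real.log (π/2))⁻¹ / δ := div_pos (inv_pos.mpr l0_pos) hδ
    rw [hK₁]; linarith
  refine ⟨K₁ ^ b₂, Real.rpow_pos_of_pos (by linarith) _, ?_⟩
  intro L hL x hx y hy
  have hL0 : (0:ℝ) < L := by linarith
  have hx0 : (0:ℝ) < nrm d x := by linarith
  set X := vee (nrm d x) L with hX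
  set Y := vee (nrm d y) L with hY
  have hX0 : 0 < X := vee_pos hL0 _
  have hY0 : 0 < Y := vee_pos hL0 _
  have hYX : Y ≤ X := by
    rw [hX, hY, vee, vee]
    have h : max (nrm d y) L ≤ max (nrm d x) L := by
      apply max_le_max _ le_rfl
      linarith [nrm_nonneg y]
    nlinarith [pi_half_pos]
  set A := vee (nrm d x / L) 1 with hA
  set B := vee (nrm d y / L) 1 with hB
  have hAX : A = X / L := by rw [hA, hX]; exact vee_div_eq hL0 _
  have hBY : B = Y / L := by rw [hB, hY]; exact vee_div_eq hL0 _
  have hB0 : 0 < B := vee_one_pos _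
  have hA0 : 0 < A := vee_one_pos _
  have hBA : B ≤ A := by
    rw [hAX, hBY]
    exact div_le_div_of_nonneg_right hYX hL0.le
  set t := A / B with ht
  have ht1 : 1 ≤ t := (one_le_div hB0).mpr hBA
  have ht0 : 0 < t := by linarith
  set lB := Real.log B with hlB
  set ℓ := Real.log A with hℓ
  have hlBl0 : Real.log (π/2) ≤ lB := log_vee_ge _
  have hlB0 : 0 < lB := lt_of_lt_of_le l0_pos hlBl0
  have hℓ0 : 0 < ℓ := log_vee_pos _
  have hlogt : 0 ≤ Real.log t := Real.log_nonneg ht1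
  have hsplit : ℓ = lB + Real.log t := by
    rw [hℓ, hlB, ht, Real.log_div hA0.ne' hB0.ne']
    ring
  have step1 : ℓ ≤ lB * (1 + (Real.log (π/2))⁻¹ * Real.log t) := by
    have h1 : (1:ℝ) ≤ lB * (Real.log (π/2))⁻¹ := by
      rw [← mul_inv_cancel₀ l0_pos.ne']
      apply mul_le_mul_of_nonneg_right hlBl0 (inv_pos.mpr l0_pos).le
    nlinarith [hlogt, hlB0]
  have step2 : 1 + (Real.log (π/2))⁻¹ * Real.log t ≤ K₁ * t ^ δ :=
    one_add_mul_log_le (inv_pos.mpr l0_pos).le hδ ht1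
  have htδ : 0 < t ^ δ := Real.rpow_pos_of_pos ht0 _
  have step3 : ℓ ≤ lB * (K₁ * t ^ δ) := by
    calc ℓ ≤ lB * (1 + (Real.log (π/2))⁻¹ * Real.log t) := step1
      _ ≤ lB * (K₁ * t ^ δ) := mul_le_mul_of_nonneg_left step2 hlB0.le
  have main : ℓ ^ b₂ ≤ lB ^ b₂ * (K₁ ^ b₂ * t ^ ε) := by
    have h1 : ℓ ^ b₂ ≤ (lB * (K₁ * t ^ δ)) ^ b₂ := Real.rpow_le_rpow hℓ0.le step3 hb₂
    have h2 : (lB * (K₁ * t ^ δ)) ^ b₂ = lB ^ b₂ * (K₁ ^ b₂ * (t ^ δ) ^ b₂) := by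
      rw [Real.mul_rpow hlB0.le (by positivity), Real.mul_rpow (by linarith) htδ.le]
    have h3 : (t ^ δ) ^ b₂ = t ^ (δ * b₂) := (Real.rpow_mul ht0.le _ _).symm
    have h4 : t ^ (δ * b₂) ≤ t ^ ε := by
      apply Real.rpow_le_rpow_of_exponent_le ht1
      rw [hδdef, div_mul_eq_mul_div, div_le_iff₀ (by linarith : (0:ℝ) < max b₂ 1)]
      nlinarith [le_max_left b₂ 1, hε]
    calc ℓ ^ b₂ ≤ lB ^ b₂ * (K₁ ^ b₂ * (t ^ δ) ^ b₂) := h2 ▸ h1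
      _ = lB ^ b₂ * (K₁ ^ b₂ * t ^ (δ * b₂)) := by rw [h3]
      _ ≤ lB ^ b₂ * (K₁ ^ b₂ * t ^ ε) := by
          apply mul_le_mul_of_nonneg_left _ (Real.rpow_nonneg hlB0.le _)
          apply mul_le_mul_of_nonneg_left h4 (Real.rpow_nonneg (by linarith) _)
  -- convert t^ε into X^ε Y^(-ε)
  have hTXY : t = X / Y := by
    rw [ht, hAX, hBY]
    field_simp
  have htε : t ^ ε = X ^ ε * Y ^ (-ε) := by
    rw [hTXY, Real.div_rpow hX0.le hY0.le, Real.rpow_neg hY0.le, div_eq_mul_inv]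
  -- divide
  have hlBp : 0 < lB ^ b₂ := Real.rpow_pos_of_pos hlB0 _
  have hℓp : 0 < ℓ ^ b₂ := Real.rpow_pos_of_pos hℓ0 _
  have hRp : 0 < K₁ ^ b₂ * t ^ ε :=
    mul_pos (Real.rpow_pos_of_pos (by linarith) _) (Real.rpow_pos_of_pos ht0 _)
  have hdiv : (lB ^ b₂)⁻¹ ≤ (K₁ ^ b₂ * t ^ ε) * (ℓ ^ b₂)⁻¹ := by
    rw [← one_div, ← div_eq_mul_inv]
    rw [div_le_div_iff₀ hlBp hℓp]
    nlinarith [main]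
  calc lB ^ (-b₂) = (lB ^ b₂)⁻¹ := by rw [Real.rpow_neg hlB0.le]
    _ ≤ (K₁ ^ b₂ * t ^ ε) * (ℓ ^ b₂)⁻¹ := hdiv
    _ = K₁ ^ b₂ * ℓ ^ (-b₂) * t ^ ε := by rw [Real.rpow_neg hℓ0.le]; ring
    _ = K₁ ^ b₂ * ℓ ^ (-b₂) * (X ^ ε * Y ^ (-ε)) := by rw [htε]

/-- the summand -/
def FF (d : ℕ) (b₁ b₂ L : ℝ) (x y : Fin d → ℤ) : ℝ :=
  vee (nrm d (x - y)) L ^ (-(d:ℝ)) * Real.log (vee (nrm d (x - y) / L) 1) ^ (-1 : ℝ) *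
    (vee (nrm d y) L ^ (-b₁) * Real.log (vee (nrm d y / L) 1) ^ (-b₂))

lemma FF_eq (d : ℕ) (b₁ b₂ L : ℝ) (x y : Fin d → ℤ) : FF d b₁ b₂ L x y =
  vee (nrm d (x - y)) L ^ (-(d:ℝ)) * Real.log (vee (nrm d (x - y) / L) 1) ^ (-1 : ℝ) *
    (vee (nrm d y) L ^ (-b₁) * Real.log (vee (nrm d y / L) 1) ^ (-b₂)) := rfl

/-- the target quantity (without the constant) -/
def RHS0 (d : ℕ) (b₁ b₂ L : ℝ) (x : Fin d → ℤ) : ℝ :=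
  Real.log (Real.log (vee (nrm d x / L) 1)) *
    (vee (nrm d x) L ^ (-b₁) * Real.log (vee (nrm d x / L) 1) ^ (-b₂))

lemma RHS0_eq (d : ℕ) (b₁ b₂ L : ℝ) (x : Fin d → ℤ) : RHS0 d b₁ b₂ L x =
  Real.log (Real.log (vee (nrm d x / L) 1)) *
    (vee (nrm d x) L ^ (-b₁) * Real.log (vee (nrm d x / L) 1) ^ (-b₂)) := rfl

lemma FF_nonneg (b₁ b₂ L : ℝ) (hL : 1 ≤ L) (x y : Fin d → ℤ) : 0 ≤ FF d b₁ b₂ L x y := by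
  have hL0 : (0:ℝ) < L := by linarith
  have q1 : (0:ℝ) ≤ vee (nrm d (x-y)) L := (vee_pos hL0 _).le
  have q2 : (0:ℝ) ≤ vee (nrm d y) L := (vee_pos hL0 _).le
  have q3 : (0:ℝ) ≤ Real.log (vee (nrm d (x-y) / L) 1) := (log_vee_pos _).le
  have q4 : (0:ℝ) ≤ Real.log (vee (nrm d y / L) 1) := (log_vee_pos _).le
  exact mul_nonneg (mul_nonneg (Real.rpow_nonneg q1 _) (Real.rpow_nonneg q3 _))
    (mul_nonneg (Real.rpow_nonneg q2 _) (Real.rpow_nonneg q4 _))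

lemma RHS0_nonneg (b₁ b₂ L : ℝ) (hL : 1 ≤ L) (x : Fin d → ℤ) (hx : 2*L ≤ nrm d x) :
    0 ≤ RHS0 d b₁ b₂ L x := by
  have hL0 : (0:ℝ) < L := by linarith
  have h1 : 0 ≤ Real.log (Real.log (vee (nrm d x / L) 1)) :=
    le_trans c0_pos.le (loglog_ge hL hx)
  exact mul_nonneg h1 (mul_nonneg (Real.rpow_nonneg (vee_pos hL0 _).le _)
    (Real.rpow_nonneg (log_vee_pos _).le _))

lemma bound_far_pow {a L : ℝ} (ha : 0 ≤ a) (hL : 1 ≤ L) {x : Fin d → ℤ} (hx : 2*L ≤ nrm d x)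
    {w : Fin d → ℤ} (hw : nrm d x ≤ 2 * nrm d w) :
    vee (nrm d w) L ^ (-a) ≤ (2:ℝ)^a * vee (nrm d x) L ^ (-a) := by
  have hL0 : (0:ℝ) < L := by linarith
  have hX0 : 0 < vee (nrm d x) L := vee_pos hL0 _
  have h1 : vee (nrm d x) L / 2 ≤ vee (nrm d w) L := by
    rw [veeX_eq hL hx, vee]
    have h2 : nrm d x / 2 ≤ max (nrm d w) L := le_trans (by linarith) (le_max_left _ _)
    nlinarith [pi_half_pos]
  calc vee (nrm d w) L ^ (-a) ≤ (vee (nrm d x) L / 2) ^ (-a) :=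
        rpow_neg_anti (by positivity) h1 ha
    _ = (2:ℝ)^a * vee (nrm d x) L ^ (-a) := by
        rw [Real.div_rpow hX0.le (by norm_num), Real.rpow_neg (by norm_num : (0:ℝ) ≤ 2),
          div_eq_mul_inv, inv_inv]
        ring

lemma bound_far_log {b L : ℝ} (hb : 0 ≤ b) (hL : 1 ≤ L) {x : Fin d → ℤ} (hx : 2*L ≤ nrm d x)
    {w : Fin d → ℤ} (hw : nrm d x ≤ 2 * nrm d w) :
    Real.log (vee (nrm d w / L) 1) ^ (-b) ≤
      (1 - Real.log 2 / Real.log π) ^ (-b) * Real.log (vee (nrm d x / L) 1) ^ (-b) := by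
  have h1 := LB hL hx hw
  have hc₁ := LB_pos
  have hℓ0 : 0 < Real.log (vee (nrm d x / L) 1) := log_vee_pos _
  calc Real.log (vee (nrm d w / L) 1) ^ (-b)
      ≤ ((1 - Real.log 2 / Real.log π) * Real.log (vee (nrm d x / L) 1)) ^ (-b) :=
        rpow_neg_anti (by positivity) h1 hb
    _ = (1 - Real.log 2 / Real.log π) ^ (-b) * Real.log (vee (nrm d x / L) 1) ^ (-b) :=
        Real.mul_rpow hc₁.le hℓ0.le

lemma absorb {Q r L : ℝ} (hQ : 0 ≤ Q) (hr : 0 ≤ r) (hL : 1 ≤ L) {x : Fin d → ℤ}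
    (hx : 2*L ≤ nrm d x) :
    Q * r ≤ Q / Real.log (Real.log π) * Real.log (Real.log (vee (nrm d x / L) 1)) * r := by
  apply mul_le_mul_of_nonneg_right _ hr
  calc Q = Q / Real.log (Real.log π) * Real.log (Real.log π) := by
        rw [div_mul_cancel₀ _ c0_pos.ne']
    _ ≤ Q / Real.log (Real.log π) * Real.log (Real.log (vee (nrm d x / L) 1)) :=
        mul_le_mul_of_nonneg_left (loglog_ge hL hx) (div_nonneg hQ c0_pos.le)

lemma regionA (hd : 1 ≤ d) {b₁ b₂ : ℝ} (hab : b₁ ≤ (d:ℝ)) (hb₁ : 0 < b₁) (hb₂ : 0 ≤ b₂)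
    (heq : (d:ℝ) = b₁ → b₂ ≤ 1) :
    ∃ C : ℝ, 0 < C ∧ ∀ L : ℝ, 1 ≤ L → ∀ x : Fin d → ℤ, 2*L ≤ nrm d x →
      ∀ s : Finset (Fin d → ℤ), (∀ y ∈ s, 2 * nrm d y ≤ nrm d x) →
      ∑ y ∈ s, FF d b₁ b₂ L x y ≤ C * RHS0 d b₁ b₂ L x := by
  have hc₁ := LB_pos
  set c₁ := 1 - Real.log 2 / Real.log π with hc₁def
  have hc₁p : (0:ℝ) < c₁ ^ (-1:ℝ) := Real.rpow_pos_of_pos hc₁ _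
  by_cases hcase : (d:ℝ) = b₁
  · -- b₁ = d
    subst hcase
    obtain ⟨C1, hC1, H1⟩ := core1 hd hb₂ (heq rfl)
    refine ⟨(2:ℝ)^((d:ℕ):ℝ) * c₁ ^ (-1:ℝ) * C1,
      mul_pos (mul_pos (Real.rpow_pos_of_pos two_pos _) hc₁p) hC1, ?_⟩
    intro L hL x hx s hs
    have hL0 : (0:ℝ) < L := by linarith
    set ℓ := Real.log (vee (nrm d x / L) 1) with hldef
    set X := vee (nrm d x) L with hXdef
    have hX0 : 0 < X := vee_pos hL0 _
    have hℓ1 : 1 < ℓ := ellx_gt_one hL hx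
    have hℓ0 : 0 < ℓ := by linarith
    have hABn : (0:ℝ) ≤ ((2:ℝ)^((d:ℕ):ℝ) * X ^ (-(d:ℝ))) * (c₁ ^ (-1:ℝ) * ℓ ^ (-1:ℝ)) :=
      mul_nonneg (mul_nonneg (Real.rpow_nonneg (by norm_num) _) (Real.rpow_nonneg hX0.le _))
        (mul_nonneg hc₁p.le (Real.rpow_nonneg hℓ0.le _))
    have hpt : ∀ y ∈ s, FF d ((d:ℕ):ℝ) b₂ L x y ≤
        ((2:ℝ)^((d:ℕ):ℝ) * X ^ (-(d:ℝ))) * (c₁ ^ (-1:ℝ) * ℓ ^ (-1:ℝ)) *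
          (vee (nrm d y) L ^ (-(d:ℝ)) * Real.log (vee (nrm d y / L) 1) ^ (-b₂)) := by
      intro y hy
      have hw : nrm d x ≤ 2 * nrm d (x - y) := by
        have := nrm_triangle x y
        linarith [hs y hy]
      have p1 := bound_far_pow (L := L) (by positivity : (0:ℝ) ≤ ((d:ℕ):ℝ)) hL hx hw
      have p2 := bound_far_log (L := L) (by norm_num : (0:ℝ) ≤ (1:ℝ)) hL hx hw
      rw [FF_eq]
      have hcdn : (0:ℝ) ≤ vee (nrm d y) L ^ (-((d:ℕ):ℝ)) * Real.log (vee (nrm d y / L) 1) ^ (-b₂) :=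
        mul_nonneg (Real.rpow_nonneg (vee_pos hL0 _).le _)
          (Real.rpow_nonneg (log_vee_pos _).le _)
      exact mul_le_mul
        (mul_le_mul p1 p2 (Real.rpow_nonneg (log_vee_pos _).le _)
          (mul_nonneg (Real.rpow_nonneg (by norm_num) _) (Real.rpow_nonneg hX0.le _)))
        le_rfl hcdn hABn
    have hsum : ∑ y ∈ s, FF d ((d:ℕ):ℝ) b₂ L x y ≤
        ((2:ℝ)^((d:ℕ):ℝ) * X ^ (-(d:ℝ))) * (c₁ ^ (-1:ℝ) * ℓ ^ (-1:ℝ)) *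
          ∑ y ∈ s, vee (nrm d y) L ^ (-(d:ℝ)) * Real.log (vee (nrm d y / L) 1) ^ (-b₂) := by
      rw [Finset.mul_sum]
      exact Finset.sum_le_sum hpt
    have hcore := H1 L hL x hx s hs
    calc ∑ y ∈ s, FF d ((d:ℕ):ℝ) b₂ L x y
        ≤ ((2:ℝ)^((d:ℕ):ℝ) * X ^ (-(d:ℝ))) * (c₁ ^ (-1:ℝ) * ℓ ^ (-1:ℝ)) *
          ∑ y ∈ s, vee (nrm d y) L ^ (-(d:ℝ)) * Real.log (vee (nrm d y / L) 1) ^ (-b₂) := hsum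
      _ ≤ ((2:ℝ)^((d:ℕ):ℝ) * X ^ (-(d:ℝ))) * (c₁ ^ (-1:ℝ) * ℓ ^ (-1:ℝ)) *
          (C1 * ℓ ^ (1-b₂) * Real.log ℓ) := mul_le_mul_of_nonneg_left hcore hABn
      _ = ((2:ℝ)^((d:ℕ):ℝ) * c₁ ^ (-1:ℝ) * C1) *
          (Real.log ℓ * (X ^ (-((d:ℕ):ℝ)) * (ℓ ^ (-1:ℝ) * ℓ ^ (1-b₂)))) := by ring
      _ = ((2:ℝ)^((d:ℕ):ℝ) * c₁ ^ (-1:ℝ) * C1) *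
          (Real.log ℓ * (X ^ (-((d:ℕ):ℝ)) * ℓ ^ (-b₂))) := by
          rw [← Real.rpow_add hℓ0, show (-1) + (1-b₂) = -b₂ from by ring]
      _ = ((2:ℝ)^((d:ℕ):ℝ) * c₁ ^ (-1:ℝ) * C1) * RHS0 d ((d:ℕ):ℝ) b₂ L x := by
          rw [RHS0_eq, ← hldef, ← hXdef]
  · -- b₁ < d
    have hlt : b₁ < (d:ℝ) := lt_of_le_of_ne hab (fun h => hcase h.symm)
    set ε := ((d:ℝ) - b₁)/2 with hεdef
    have hε : 0 < ε := by rw [hεdef]; linarith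
    obtain ⟨K, hK, HK⟩ := logratio (d := d) hb₂ hε
    obtain ⟨C2, hC2, H2⟩ := core2 hd (show 0 < b₁ + ε by linarith)
      (show b₁ + ε < (d:ℝ) by rw [hεdef]; linarith)
    refine ⟨(2:ℝ)^((d:ℕ):ℝ) * c₁ ^ (-1:ℝ) * K * C2 / Real.log (Real.log π),
      div_pos (mul_pos (mul_pos (mul_pos (Real.rpow_pos_of_pos two_pos _) hc₁p) hK) hC2)
        c0_pos, ?_⟩
    intro L hL x hx s hs
    have hL0 : (0:ℝ) < L := by linarith
    set ℓ := Real.log (vee (nrm d x / L) 1) with hldef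
    set X := vee (nrm d x) L with hXdef
    have hX0 : 0 < X := vee_pos hL0 _
    have hℓ1 : 1 < ℓ := ellx_gt_one hL hx
    have hℓ0 : 0 < ℓ := by linarith
    set Kbig := ((2:ℝ)^((d:ℕ):ℝ) * X ^ (-(d:ℝ))) * (c₁ ^ (-1:ℝ) * ℓ ^ (-1:ℝ)) *
      (K * ℓ ^ (-b₂) * X ^ ε) with hKbig
    have hKbign : 0 ≤ Kbig := by
      rw [hKbig]
      exact mul_nonneg (mul_nonneg
        (mul_nonneg (Real.rpow_nonneg (by norm_num) _) (Real.rpow_nonneg hX0.le _))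
        (mul_nonneg hc₁p.le (Real.rpow_nonneg hℓ0.le _)))
        (mul_nonneg (mul_nonneg hK.le (Real.rpow_nonneg hℓ0.le _)) (Real.rpow_nonneg hX0.le _))
    have hpt : ∀ y ∈ s, FF d b₁ b₂ L x y ≤ Kbig * vee (nrm d y) L ^ (-(b₁ + ε)) := by
      intro y hy
      have hY0 : 0 < vee (nrm d y) L := vee_pos hL0 _
      have hw : nrm d x ≤ 2 * nrm d (x - y) := by
        have := nrm_triangle x y
        linarith [hs y hy]
      have p1 := bound_far_pow (L := L) (by positivity : (0:ℝ) ≤ ((d:ℕ):ℝ)) hL hx hw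
      have p2 := bound_far_log (L := L) (by norm_num : (0:ℝ) ≤ (1:ℝ)) hL hx hw
      have p3 := HK L hL x hx y (hs y hy)
      rw [FF_eq]
      have habn : (0:ℝ) ≤ ((2:ℝ)^((d:ℕ):ℝ) * X ^ (-(d:ℝ))) * (c₁ ^ (-1:ℝ) * ℓ ^ (-1:ℝ)) :=
        mul_nonneg (mul_nonneg (Real.rpow_nonneg (by norm_num) _) (Real.rpow_nonneg hX0.le _))
          (mul_nonneg hc₁p.le (Real.rpow_nonneg hℓ0.le _))
      have hstep : vee (nrm d y) L ^ (-b₁) * Real.log (vee (nrm d y / L) 1) ^ (-b₂) ≤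
          vee (nrm d y) L ^ (-b₁) * (K * ℓ ^ (-b₂) * (X ^ ε * vee (nrm d y) L ^ (-ε))) :=
        mul_le_mul_of_nonneg_left p3 (Real.rpow_nonneg hY0.le _)
      have hcd0 : (0:ℝ) ≤ vee (nrm d y) L ^ (-b₁) * Real.log (vee (nrm d y / L) 1) ^ (-b₂) :=
        mul_nonneg (Real.rpow_nonneg hY0.le _) (Real.rpow_nonneg (log_vee_pos _).le _)
      calc vee (nrm d (x-y)) L ^ (-(d:ℝ)) * Real.log (vee (nrm d (x-y) / L) 1) ^ (-1:ℝ) *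
            (vee (nrm d y) L ^ (-b₁) * Real.log (vee (nrm d y / L) 1) ^ (-b₂))
          ≤ ((2:ℝ)^((d:ℕ):ℝ) * X ^ (-(d:ℝ))) * (c₁ ^ (-1:ℝ) * ℓ ^ (-1:ℝ)) *
            (vee (nrm d y) L ^ (-b₁) * (K * ℓ ^ (-b₂) * (X ^ ε * vee (nrm d y) L ^ (-ε)))) := by
            apply mul_le_mul _ hstep hcd0 habn
            exact mul_le_mul p1 p2 (Real.rpow_nonneg (log_vee_pos _).le _)
              (mul_nonneg (Real.rpow_nonneg (by norm_num) _) (Real.rpow_nonneg hX0.le _))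
        _ = Kbig * (vee (nrm d y) L ^ (-b₁) * vee (nrm d y) L ^ (-ε)) := by
            rw [hKbig]; ring
        _ = Kbig * vee (nrm d y) L ^ (-(b₁ + ε)) := by
            rw [← Real.rpow_add hY0, show -b₁ + -ε = -(b₁+ε) from by ring]
    have hsum : ∑ y ∈ s, FF d b₁ b₂ L x y ≤ Kbig * ∑ y ∈ s, vee (nrm d y) L ^ (-(b₁+ε)) := by
      rw [Finset.mul_sum]
      exact Finset.sum_le_sum hpt
    have hcore := H2 L hL x hx s hs
    have hmid : ∑ y ∈ s, FF d b₁ b₂ L x y ≤ Kbig * (C2 * ℓ * X ^ ((d:ℝ) - (b₁+ε))) :=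
      le_trans hsum (mul_le_mul_of_nonneg_left hcore hKbign)
    have e1 : Kbig * (C2 * ℓ * X ^ ((d:ℝ) - (b₁+ε))) =
        ((2:ℝ)^((d:ℕ):ℝ) * c₁ ^ (-1:ℝ) * K * C2) * (ℓ ^ (-1:ℝ) * ℓ) *
          (X ^ (-(d:ℝ)) * X ^ ε * X ^ ((d:ℝ) - (b₁+ε))) * ℓ ^ (-b₂) := by
      rw [hKbig]; ring
    have e2 : ℓ ^ (-1:ℝ) * ℓ = 1 := by
      rw [Real.rpow_neg_one]
      exact inv_mul_cancel₀ hℓ0.ne'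
    have e3 : X ^ (-(d:ℝ)) * X ^ ε * X ^ ((d:ℝ) - (b₁+ε)) = X ^ (-b₁) := by
      rw [← Real.rpow_add hX0, ← Real.rpow_add hX0,
        show -(d:ℝ) + ε + ((d:ℝ) - (b₁+ε)) = -b₁ from by ring]
    have hmid2 : ∑ y ∈ s, FF d b₁ b₂ L x y ≤
        ((2:ℝ)^((d:ℕ):ℝ) * c₁ ^ (-1:ℝ) * K * C2) * (X ^ (-b₁) * ℓ ^ (-b₂)) := by
      calc ∑ y ∈ s, FF d b₁ b₂ L x y ≤ Kbig * (C2 * ℓ * X ^ ((d:ℝ) - (b₁+ε))) := hmid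
        _ = ((2:ℝ)^((d:ℕ):ℝ) * c₁ ^ (-1:ℝ) * K * C2) * (ℓ ^ (-1:ℝ) * ℓ) *
            (X ^ (-(d:ℝ)) * X ^ ε * X ^ ((d:ℝ) - (b₁+ε))) * ℓ ^ (-b₂) := e1
        _ = ((2:ℝ)^((d:ℕ):ℝ) * c₁ ^ (-1:ℝ) * K * C2) * (X ^ (-b₁) * ℓ ^ (-b₂)) := by
            rw [e2, e3]; ring
    have habs := absorb (Q := (2:ℝ)^((d:ℕ):ℝ) * c₁ ^ (-1:ℝ) * K * C2)
      (r := X ^ (-b₁) * ℓ ^ (-b₂))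
      (mul_nonneg (mul_nonneg (mul_nonneg (Real.rpow_nonneg (by norm_num) _) hc₁p.le) hK.le)
        hC2.le)
      (mul_nonneg (Real.rpow_nonneg hX0.le _) (Real.rpow_nonneg hℓ0.le _)) hL hx
    calc ∑ y ∈ s, FF d b₁ b₂ L x y
        ≤ ((2:ℝ)^((d:ℕ):ℝ) * c₁ ^ (-1:ℝ) * K * C2) * (X ^ (-b₁) * ℓ ^ (-b₂)) := hmid2
      _ ≤ ((2:ℝ)^((d:ℕ):ℝ) * c₁ ^ (-1:ℝ) * K * C2) / Real.log (Real.log π) *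
            Real.log (Real.log (vee (nrm d x / L) 1)) * (X ^ (-b₁) * ℓ ^ (-b₂)) := habs
      _ = ((2:ℝ)^((d:ℕ):ℝ) * c₁ ^ (-1:ℝ) * K * C2) / Real.log (Real.log π) *
            RHS0 d b₁ b₂ L x := by
          rw [RHS0_eq, ← hldef, ← hXdef]
          ring

lemma regionB (hd : 1 ≤ d) {b₁ b₂ : ℝ} (hb₁ : 0 < b₁) (hb₂ : 0 ≤ b₂) :
    ∃ C : ℝ, 0 < C ∧ ∀ L : ℝ, 1 ≤ L → ∀ x : Fin d → ℤ, 2*L ≤ nrm d x →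
      ∀ s : Finset (Fin d → ℤ), (∀ y ∈ s, 2 * nrm d (x - y) ≤ nrm d x) →
      ∑ y ∈ s, FF d b₁ b₂ L x y ≤ C * RHS0 d b₁ b₂ L x := by
  classical
  have hc₁ := LB_pos
  set c₁ := 1 - Real.log 2 / Real.log π with hc₁def
  have hc₁p : (0:ℝ) < c₁ ^ (-b₂) := Real.rpow_pos_of_pos hc₁ _
  obtain ⟨C1, hC1, H1⟩ := core1 hd (β := 1) (by norm_num) le_rfl
  refine ⟨(2:ℝ)^b₁ * c₁ ^ (-b₂) * C1,
    mul_pos (mul_pos (Real.rpow_pos_of_pos two_pos _) hc₁p) hC1, ?_⟩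
  intro L hL x hx s hs
  have hL0 : (0:ℝ) < L := by linarith
  set ℓ := Real.log (vee (nrm d x / L) 1) with hldef
  set X := vee (nrm d x) L with hXdef
  have hX0 : 0 < X := vee_pos hL0 _
  have hℓ1 : 1 < ℓ := ellx_gt_one hL hx
  have hℓ0 : 0 < ℓ := by linarith
  set Bnd := (2:ℝ)^b₁ * X ^ (-b₁) * (c₁ ^ (-b₂) * ℓ ^ (-b₂)) with hBnd
  have hBndn : 0 ≤ Bnd := by
    rw [hBnd]
    exact mul_nonneg (mul_nonneg (Real.rpow_nonneg (by norm_num) _) (Real.rpow_nonneg hX0.le _))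
      (mul_nonneg hc₁p.le (Real.rpow_nonneg hℓ0.le _))
  have hpt : ∀ y ∈ s, FF d b₁ b₂ L x y ≤
      Bnd * (vee (nrm d (x - y)) L ^ (-(d:ℝ)) * Real.log (vee (nrm d (x - y) / L) 1) ^ (-1:ℝ)) := by
    intro y hy
    have hw : nrm d x ≤ 2 * nrm d y := by
      have := nrm_triangle x y
      linarith [hs y hy]
    have p1 := bound_far_pow (L := L) hb₁.le hL hx hw
    have p2 := bound_far_log (L := L) hb₂ hL hx hw
    have habn : (0:ℝ) ≤ vee (nrm d (x-y)) L ^ (-(d:ℝ)) * Real.log (vee (nrm d (x-y) / L) 1) ^ (-1:ℝ) :=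
      mul_nonneg (Real.rpow_nonneg (vee_pos hL0 _).le _) (Real.rpow_nonneg (log_vee_pos _).le _)
    rw [FF_eq]
    calc vee (nrm d (x-y)) L ^ (-(d:ℝ)) * Real.log (vee (nrm d (x-y) / L) 1) ^ (-1:ℝ) *
          (vee (nrm d y) L ^ (-b₁) * Real.log (vee (nrm d y / L) 1) ^ (-b₂))
        ≤ (vee (nrm d (x-y)) L ^ (-(d:ℝ)) * Real.log (vee (nrm d (x-y) / L) 1) ^ (-1:ℝ)) *
          (((2:ℝ)^b₁ * X ^ (-b₁)) * (c₁ ^ (-b₂) * ℓ ^ (-b₂))) := by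
          apply mul_le_mul_of_nonneg_left _ habn
          exact mul_le_mul p1 p2 (Real.rpow_nonneg (log_vee_pos _).le _)
            (mul_nonneg (Real.rpow_nonneg (by norm_num) _) (Real.rpow_nonneg hX0.le _))
      _ = Bnd * (vee (nrm d (x-y)) L ^ (-(d:ℝ)) * Real.log (vee (nrm d (x-y) / L) 1) ^ (-1:ℝ)) := by
          rw [hBnd]; ring
  have hsum : ∑ y ∈ s, FF d b₁ b₂ L x y ≤
      Bnd * ∑ y ∈ s,
        (vee (nrm d (x - y)) L ^ (-(d:ℝ)) * Real.log (vee (nrm d (x - y) / L) 1) ^ (-1:ℝ)) := by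
    rw [Finset.mul_sum]
    exact Finset.sum_le_sum hpt
  have hre : ∑ y ∈ s,
      (vee (nrm d (x - y)) L ^ (-(d:ℝ)) * Real.log (vee (nrm d (x - y) / L) 1) ^ (-1:ℝ))
      = ∑ z ∈ s.image (fun y => x - y),
        (vee (nrm d z) L ^ (-(d:ℝ)) * Real.log (vee (nrm d z / L) 1) ^ (-1:ℝ)) := by
    rw [Finset.sum_image (fun a _ b _ h => sub_right_injective h)]
  have hcond : ∀ z ∈ s.image (fun y => x - y), 2 * nrm d z ≤ nrm d x := by
    intro z hz
    obtain ⟨y, hy, rfl⟩ := Finset.mem_image.mp hz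
    exact hs y hy
  have hcore := H1 L hL x hx (s.image (fun y => x - y)) hcond
  have e0 : ℓ ^ ((1:ℝ)-1) = 1 := by
    rw [show (1:ℝ)-1 = 0 from by ring, Real.rpow_zero]
  calc ∑ y ∈ s, FF d b₁ b₂ L x y
      ≤ Bnd * ∑ z ∈ s.image (fun y => x - y),
          (vee (nrm d z) L ^ (-(d:ℝ)) * Real.log (vee (nrm d z / L) 1) ^ (-1:ℝ)) := by
        rw [← hre]; exact hsum
    _ ≤ Bnd * (C1 * ℓ ^ ((1:ℝ)-1) * Real.log ℓ) := mul_le_mul_of_nonneg_left hcore hBndn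
    _ = (2:ℝ)^b₁ * c₁ ^ (-b₂) * C1 * (Real.log ℓ * (X ^ (-b₁) * ℓ ^ (-b₂))) := by
        rw [hBnd, e0]; ring
    _ = (2:ℝ)^b₁ * c₁ ^ (-b₂) * C1 * RHS0 d b₁ b₂ L x := by
        rw [RHS0_eq, ← hldef, ← hXdef]

lemma regionF1 (hd : 1 ≤ d) {b₁ b₂ : ℝ} (hb₁ : 0 < b₁) (hb₂ : 0 ≤ b₂) :
    ∃ C : ℝ, 0 < C ∧ ∀ L : ℝ, 1 ≤ L → ∀ x : Fin d → ℤ, 2*L ≤ nrm d x →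
      ∀ s : Finset (Fin d → ℤ),
      (∀ y ∈ s, nrm d x < 2 * nrm d y ∧ nrm d y ≤ nrm d (x - y)) →
      ∑ y ∈ s, FF d b₁ b₂ L x y ≤ C * RHS0 d b₁ b₂ L x := by
  have hc₁ := LB_pos
  set c₁ := 1 - Real.log 2 / Real.log π with hc₁def
  have hc₁p : (0:ℝ) < c₁ ^ (-b₂) := Real.rpow_pos_of_pos hc₁ _
  have hl0p : (0:ℝ) < Real.log (π/2) ^ (-1:ℝ) := Real.rpow_pos_of_pos l0_pos _
  obtain ⟨C3, hC3, H3⟩ := core3 hd hb₁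
  refine ⟨Real.log (π/2) ^ (-1:ℝ) * c₁ ^ (-b₂) * C3 / Real.log (Real.log π),
    div_pos (mul_pos (mul_pos hl0p hc₁p) hC3) c0_pos, ?_⟩
  intro L hL x hx s hs
  have hL0 : (0:ℝ) < L := by linarith
  set ℓ := Real.log (vee (nrm d x / L) 1) with hldef
  set X := vee (nrm d x) L with hXdef
  have hX0 : 0 < X := vee_pos hL0 _
  have hℓ1 : 1 < ℓ := ellx_gt_one hL hx
  have hℓ0 : 0 < ℓ := by linarith
  set Kq := Real.log (π/2) ^ (-1:ℝ) * (c₁ ^ (-b₂) * ℓ ^ (-b₂)) with hKq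
  have hKqn : 0 ≤ Kq := by
    rw [hKq]
    exact mul_nonneg hl0p.le (mul_nonneg hc₁p.le (Real.rpow_nonneg hℓ0.le _))
  have hpt : ∀ y ∈ s, FF d b₁ b₂ L x y ≤ Kq * vee (nrm d y) L ^ (-(d:ℝ) - b₁) := by
    intro y hy
    have hY0 : 0 < vee (nrm d y) L := vee_pos hL0 _
    have hZ0 : 0 < vee (nrm d (x-y)) L := vee_pos hL0 _
    have hvmono : vee (nrm d y) L ≤ vee (nrm d (x-y)) L := by
      rw [vee, vee]
      have := (hs y hy).2
      have h2 : max (nrm d y) L ≤ max (nrm d (x-y)) L := max_le_max this le_rfl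
      nlinarith [pi_half_pos]
    have q1 : vee (nrm d (x-y)) L ^ (-(d:ℝ)) ≤ vee (nrm d y) L ^ (-(d:ℝ)) :=
      rpow_neg_anti hY0 hvmono (by positivity)
    have q2 : Real.log (vee (nrm d (x-y) / L) 1) ^ (-1:ℝ) ≤ Real.log (π/2) ^ (-1:ℝ) :=
      rpow_neg_anti l0_pos (log_vee_ge _) (by norm_num)
    have q3 := bound_far_log (L := L) hb₂ hL hx (le_of_lt (hs y hy).1)
    rw [FF_eq]
    calc vee (nrm d (x-y)) L ^ (-(d:ℝ)) * Real.log (vee (nrm d (x-y) / L) 1) ^ (-1:ℝ) *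
          (vee (nrm d y) L ^ (-b₁) * Real.log (vee (nrm d y / L) 1) ^ (-b₂))
        ≤ (vee (nrm d y) L ^ (-(d:ℝ)) * Real.log (π/2) ^ (-1:ℝ)) *
          (vee (nrm d y) L ^ (-b₁) * (c₁ ^ (-b₂) * ℓ ^ (-b₂))) := by
          apply mul_le_mul
          · exact mul_le_mul q1 q2 (Real.rpow_nonneg (log_vee_pos _).le _)
              (Real.rpow_nonneg hY0.le _)
          · exact mul_le_mul_of_nonneg_left q3 (Real.rpow_nonneg hY0.le _)
          · exact mul_nonneg (Real.rpow_nonneg hY0.le _)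
              (Real.rpow_nonneg (log_vee_pos _).le _)
          · exact mul_nonneg (Real.rpow_nonneg hY0.le _) hl0p.le
      _ = Kq * (vee (nrm d y) L ^ (-(d:ℝ)) * vee (nrm d y) L ^ (-b₁)) := by
          rw [hKq]; ring
      _ = Kq * vee (nrm d y) L ^ (-(d:ℝ) - b₁) := by
          rw [← Real.rpow_add hY0, show -(d:ℝ) + -b₁ = -(d:ℝ) - b₁ from by ring]
  have hcond : ∀ z ∈ s, nrm d x < 2 * nrm d z := fun z hz => (hs z hz).1
  have hcore := H3 L hL x hx s hcond
  have hmid : ∑ y ∈ s, FF d b₁ b₂ L x y ≤ Kq * (C3 * X ^ (-b₁)) := by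
    calc ∑ y ∈ s, FF d b₁ b₂ L x y ≤ Kq * ∑ y ∈ s, vee (nrm d y) L ^ (-(d:ℝ) - b₁) := by
          rw [Finset.mul_sum]; exact Finset.sum_le_sum hpt
      _ ≤ Kq * (C3 * X ^ (-b₁)) := mul_le_mul_of_nonneg_left hcore hKqn
  have hmid2 : ∑ y ∈ s, FF d b₁ b₂ L x y ≤
      (Real.log (π/2) ^ (-1:ℝ) * c₁ ^ (-b₂) * C3) * (X ^ (-b₁) * ℓ ^ (-b₂)) := by
    calc ∑ y ∈ s, FF d b₁ b₂ L x y ≤ Kq * (C3 * X ^ (-b₁)) := hmid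
      _ = (Real.log (π/2) ^ (-1:ℝ) * c₁ ^ (-b₂) * C3) * (X ^ (-b₁) * ℓ ^ (-b₂)) := by
          rw [hKq]; ring
  have habs := absorb (Q := Real.log (π/2) ^ (-1:ℝ) * c₁ ^ (-b₂) * C3)
    (r := X ^ (-b₁) * ℓ ^ (-b₂)) (mul_nonneg (mul_nonneg hl0p.le hc₁p.le) hC3.le)
    (mul_nonneg (Real.rpow_nonneg hX0.le _) (Real.rpow_nonneg hℓ0.le _)) hL hx
  calc ∑ y ∈ s, FF d b₁ b₂ L x y
      ≤ (Real.log (π/2) ^ (-1:ℝ) * c₁ ^ (-b₂) * C3) * (X ^ (-b₁) * ℓ ^ (-b₂)) := hmid2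
    _ ≤ (Real.log (π/2) ^ (-1:ℝ) * c₁ ^ (-b₂) * C3) / Real.log (Real.log π) *
          Real.log (Real.log (vee (nrm d x / L) 1)) * (X ^ (-b₁) * ℓ ^ (-b₂)) := habs
    _ = (Real.log (π/2) ^ (-1:ℝ) * c₁ ^ (-b₂) * C3) / Real.log (Real.log π) *
          RHS0 d b₁ b₂ L x := by
        rw [RHS0_eq, ← hldef, ← hXdef]
        ring

lemma regionF2 (hd : 1 ≤ d) {b₁ b₂ : ℝ} (hb₁ : 0 < b₁) (hb₂ : 0 ≤ b₂) :
    ∃ C : ℝ, 0 < C ∧ ∀ L : ℝ, 1 ≤ L → ∀ x : Fin d → ℤ, 2*L ≤ nrm d x →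
      ∀ s : Finset (Fin d → ℤ),
      (∀ y ∈ s, nrm d x < 2 * nrm d (x - y) ∧ nrm d (x - y) ≤ nrm d y) →
      ∑ y ∈ s, FF d b₁ b₂ L x y ≤ C * RHS0 d b₁ b₂ L x := by
  classical
  have hc₁ := LB_pos
  set c₁ := 1 - Real.log 2 / Real.log π with hc₁def
  have hc₁p : (0:ℝ) < c₁ ^ (-b₂) := Real.rpow_pos_of_pos hc₁ _
  have hl0p : (0:ℝ) < Real.log (π/2) ^ (-1:ℝ) := Real.rpow_pos_of_pos l0_pos _
  obtain ⟨C3, hC3, H3⟩ := core3 hd hb₁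
  refine ⟨Real.log (π/2) ^ (-1:ℝ) * c₁ ^ (-b₂) * C3 / Real.log (Real.log π),
    div_pos (mul_pos (mul_pos hl0p hc₁p) hC3) c0_pos, ?_⟩
  intro L hL x hx s hs
  have hL0 : (0:ℝ) < L := by linarith
  set ℓ := Real.log (vee (nrm d x / L) 1) with hldef
  set X := vee (nrm d x) L with hXdef
  have hX0 : 0 < X := vee_pos hL0 _
  have hℓ1 : 1 < ℓ := ellx_gt_one hL hx
  have hℓ0 : 0 < ℓ := by linarith
  set Kq := Real.log (π/2) ^ (-1:ℝ) * (c₁ ^ (-b₂) * ℓ ^ (-b₂)) with hKq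
  have hKqn : 0 ≤ Kq := by
    rw [hKq]
    exact mul_nonneg hl0p.le (mul_nonneg hc₁p.le (Real.rpow_nonneg hℓ0.le _))
  have hpt : ∀ y ∈ s, FF d b₁ b₂ L x y ≤ Kq * vee (nrm d (x - y)) L ^ (-(d:ℝ) - b₁) := by
    intro y hy
    have hY0 : 0 < vee (nrm d y) L := vee_pos hL0 _
    have hZ0 : 0 < vee (nrm d (x-y)) L := vee_pos hL0 _
    have hwy : nrm d x ≤ 2 * nrm d y := by
      have h1 := (hs y hy).1
      have h2 := (hs y hy).2
      linarith
    have hvmono : vee (nrm d (x-y)) L ≤ vee (nrm d y) L := by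
      rw [vee, vee]
      have h2 : max (nrm d (x-y)) L ≤ max (nrm d y) L := max_le_max (hs y hy).2 le_rfl
      nlinarith [pi_half_pos]
    have q1 : vee (nrm d y) L ^ (-b₁) ≤ vee (nrm d (x-y)) L ^ (-b₁) :=
      rpow_neg_anti hZ0 hvmono hb₁.le
    have q2 : Real.log (vee (nrm d (x-y) / L) 1) ^ (-1:ℝ) ≤ Real.log (π/2) ^ (-1:ℝ) :=
      rpow_neg_anti l0_pos (log_vee_ge _) (by norm_num)
    have q3 := bound_far_log (L := L) hb₂ hL hx hwy
    rw [FF_eq]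
    calc vee (nrm d (x-y)) L ^ (-(d:ℝ)) * Real.log (vee (nrm d (x-y) / L) 1) ^ (-1:ℝ) *
          (vee (nrm d y) L ^ (-b₁) * Real.log (vee (nrm d y / L) 1) ^ (-b₂))
        ≤ (vee (nrm d (x-y)) L ^ (-(d:ℝ)) * Real.log (π/2) ^ (-1:ℝ)) *
          (vee (nrm d (x-y)) L ^ (-b₁) * (c₁ ^ (-b₂) * ℓ ^ (-b₂))) := by
          apply mul_le_mul
          · exact mul_le_mul_of_nonneg_left q2 (Real.rpow_nonneg hZ0.le _)
          · exact mul_le_mul q1 q3 (Real.rpow_nonneg (log_vee_pos _).le _)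
              (Real.rpow_nonneg hZ0.le _)
          · exact mul_nonneg (Real.rpow_nonneg hY0.le _)
              (Real.rpow_nonneg (log_vee_pos _).le _)
          · exact mul_nonneg (Real.rpow_nonneg hZ0.le _) hl0p.le
      _ = Kq * (vee (nrm d (x-y)) L ^ (-(d:ℝ)) * vee (nrm d (x-y)) L ^ (-b₁)) := by
          rw [hKq]; ring
      _ = Kq * vee (nrm d (x-y)) L ^ (-(d:ℝ) - b₁) := by
          rw [← Real.rpow_add hZ0, show -(d:ℝ) + -b₁ = -(d:ℝ) - b₁ from by ring]
  have hre : ∑ y ∈ s, vee (nrm d (x - y)) L ^ (-(d:ℝ) - b₁)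
      = ∑ z ∈ s.image (fun y => x - y), vee (nrm d z) L ^ (-(d:ℝ) - b₁) := by
    rw [Finset.sum_image (fun a _ b _ h => sub_right_injective h)]
  have hcond : ∀ z ∈ s.image (fun y => x - y), nrm d x < 2 * nrm d z := by
    intro z hz
    obtain ⟨y, hy, rfl⟩ := Finset.mem_image.mp hz
    exact (hs y hy).1
  have hcore := H3 L hL x hx (s.image (fun y => x - y)) hcond
  have hmid2 : ∑ y ∈ s, FF d b₁ b₂ L x y ≤
      (Real.log (π/2) ^ (-1:ℝ) * c₁ ^ (-b₂) * C3) * (X ^ (-b₁) * ℓ ^ (-b₂)) := by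
    calc ∑ y ∈ s, FF d b₁ b₂ L x y ≤ Kq * ∑ y ∈ s, vee (nrm d (x-y)) L ^ (-(d:ℝ) - b₁) := by
          rw [Finset.mul_sum]; exact Finset.sum_le_sum hpt
      _ = Kq * ∑ z ∈ s.image (fun y => x - y), vee (nrm d z) L ^ (-(d:ℝ) - b₁) := by rw [hre]
      _ ≤ Kq * (C3 * X ^ (-b₁)) := mul_le_mul_of_nonneg_left hcore hKqn
      _ = (Real.log (π/2) ^ (-1:ℝ) * c₁ ^ (-b₂) * C3) * (X ^ (-b₁) * ℓ ^ (-b₂)) := by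
          rw [hKq]; ring
  have habs := absorb (Q := Real.log (π/2) ^ (-1:ℝ) * c₁ ^ (-b₂) * C3)
    (r := X ^ (-b₁) * ℓ ^ (-b₂)) (mul_nonneg (mul_nonneg hl0p.le hc₁p.le) hC3.le)
    (mul_nonneg (Real.rpow_nonneg hX0.le _) (Real.rpow_nonneg hℓ0.le _)) hL hx
  calc ∑ y ∈ s, FF d b₁ b₂ L x y
      ≤ (Real.log (π/2) ^ (-1:ℝ) * c₁ ^ (-b₂) * C3) * (X ^ (-b₁) * ℓ ^ (-b₂)) := hmid2
    _ ≤ (Real.log (π/2) ^ (-1:ℝ) * c₁ ^ (-b₂) * C3) / Real.log (Real.log π) *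
          Real.log (Real.log (vee (nrm d x / L) 1)) * (X ^ (-b₁) * ℓ ^ (-b₂)) := habs
    _ = (Real.log (π/2) ^ (-1:ℝ) * c₁ ^ (-b₂) * C3) / Real.log (Real.log π) *
          RHS0 d b₁ b₂ L x := by
        rw [RHS0_eq, ← hldef, ← hXdef]
        ring

end ConvAux

open ConvAux

/-- Convolution bound on power functions with logarithmic corrections,
case `a₁ = d`, `a₂ = 1`: an extra `log log` factor appears. -/
theorem conv_bound_a1_eq_d_a2_eq_one
    (d : ℕ) (hd : 1 ≤ d) (b₁ b₂ : ℝ)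
    (hab : b₁ ≤ (d : ℝ)) (hb₁ : 0 < b₁)
    (hb₂ : 0 ≤ b₂) (heq : (d : ℝ) = b₁ → b₂ ≤ 1) :
    ∃ C : ℝ, 0 < C ∧
      ∀ L : ℝ, 1 ≤ L → ∀ x : Fin d → ℤ, 2 * L ≤ nrm d x →
        (∑' y : Fin d → ℤ,
            vee (nrm d (x - y)) L ^ (-(d : ℝ)) *
              Real.log (vee (nrm d (x - y) / L) 1) ^ (-1 : ℝ) *
            (vee (nrm d y) L ^ (-b₁) * Real.log (vee (nrm d y / L) 1) ^ (-b₂)))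
          ≤ C * Real.log (Real.log (vee (nrm d x / L) 1)) *
              (vee (nrm d x) L ^ (-b₁) * Real.log (vee (nrm d x / L) 1) ^ (-b₂)) := by
  classical
  obtain ⟨CA, hCA, HA⟩ := regionA hd hab hb₁ hb₂ heq
  obtain ⟨CB, hCB, HB⟩ := regionB hd hb₁ hb₂
  obtain ⟨CF1, hCF1, HF1⟩ := regionF1 hd hb₁ hb₂
  obtain ⟨CF2, hCF2, HF2⟩ := regionF2 hd hb₁ hb₂
  refine ⟨CA + CB + CF1 + CF2, by linarith, ?_⟩
  intro L hL x hx
  have hR0 : 0 ≤ RHS0 d b₁ b₂ L x := RHS0_nonneg b₁ b₂ L hL x hx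
  have hRtot : 0 ≤ (CA + CB + CF1 + CF2) * RHS0 d b₁ b₂ L x :=
    mul_nonneg (by linarith) hR0
  have key : ∀ u : Finset (Fin d → ℤ),
      ∑ y ∈ u, FF d b₁ b₂ L x y ≤ (CA + CB + CF1 + CF2) * RHS0 d b₁ b₂ L x := by
    intro u
    have e : ∑ y ∈ u, FF d b₁ b₂ L x y =
        (∑ y ∈ u.filter (fun y => 2 * nrm d y ≤ nrm d x), FF d b₁ b₂ L x y) +
        ((∑ y ∈ (u.filter (fun y => ¬ 2 * nrm d y ≤ nrm d x)).filter
            (fun y => 2 * nrm d (x - y) ≤ nrm d x), FF d b₁ b₂ L x y) +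
         ((∑ y ∈ ((u.filter (fun y => ¬ 2 * nrm d y ≤ nrm d x)).filter
              (fun y => ¬ 2 * nrm d (x - y) ≤ nrm d x)).filter
              (fun y => nrm d y ≤ nrm d (x - y)), FF d b₁ b₂ L x y) +
          (∑ y ∈ ((u.filter (fun y => ¬ 2 * nrm d y ≤ nrm d x)).filter
              (fun y => ¬ 2 * nrm d (x - y) ≤ nrm d x)).filter
              (fun y => ¬ nrm d y ≤ nrm d (x - y)), FF d b₁ b₂ L x y))) := by
      rw [Finset.sum_filter_add_sum_filter_not
        ((u.filter (fun y => ¬ 2 * nrm d y ≤ nrm d x)).filter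
          (fun y => ¬ 2 * nrm d (x - y) ≤ nrm d x)) (fun y => nrm d y ≤ nrm d (x - y))]
      rw [Finset.sum_filter_add_sum_filter_not (u.filter (fun y => ¬ 2 * nrm d y ≤ nrm d x))
        (fun y => 2 * nrm d (x - y) ≤ nrm d x)]
      rw [Finset.sum_filter_add_sum_filter_not u (fun y => 2 * nrm d y ≤ nrm d x)]
    have b1 : ∑ y ∈ u.filter (fun y => 2 * nrm d y ≤ nrm d x), FF d b₁ b₂ L x y
        ≤ CA * RHS0 d b₁ b₂ L x :=
      HA L hL x hx _ (fun y hy => (Finset.mem_filter.mp hy).2)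
    have b2 : ∑ y ∈ (u.filter (fun y => ¬ 2 * nrm d y ≤ nrm d x)).filter
          (fun y => 2 * nrm d (x - y) ≤ nrm d x), FF d b₁ b₂ L x y
        ≤ CB * RHS0 d b₁ b₂ L x :=
      HB L hL x hx _ (fun y hy => (Finset.mem_filter.mp hy).2)
    have b3 : ∑ y ∈ ((u.filter (fun y => ¬ 2 * nrm d y ≤ nrm d x)).filter
          (fun y => ¬ 2 * nrm d (x - y) ≤ nrm d x)).filter
          (fun y => nrm d y ≤ nrm d (x - y)), FF d b₁ b₂ L x y
        ≤ CF1 * RHS0 d b₁ b₂ L x := by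
      apply HF1 L hL x hx
      intro y hy
      obtain ⟨hy1, hy2⟩ := Finset.mem_filter.mp hy
      obtain ⟨hy3, hy4⟩ := Finset.mem_filter.mp hy1
      obtain ⟨hy5, hy6⟩ := Finset.mem_filter.mp hy3
      exact ⟨not_le.mp hy6, hy2⟩
    have b4 : ∑ y ∈ ((u.filter (fun y => ¬ 2 * nrm d y ≤ nrm d x)).filter
          (fun y => ¬ 2 * nrm d (x - y) ≤ nrm d x)).filter
          (fun y => ¬ nrm d y ≤ nrm d (x - y)), FF d b₁ b₂ L x y
        ≤ CF2 * RHS0 d b₁ b₂ L x := by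
      apply HF2 L hL x hx
      intro y hy
      obtain ⟨hy1, hy2⟩ := Finset.mem_filter.mp hy
      obtain ⟨hy3, hy4⟩ := Finset.mem_filter.mp hy1
      exact ⟨not_le.mp hy4, (not_le.mp hy2).le⟩
    calc ∑ y ∈ u, FF d b₁ b₂ L x y
        ≤ CA * RHS0 d b₁ b₂ L x + (CB * RHS0 d b₁ b₂ L x +
            (CF1 * RHS0 d b₁ b₂ L x + CF2 * RHS0 d b₁ b₂ L x)) := by
          rw [e]
          exact add_le_add b1 (add_le_add b2 (add_le_add b3 b4))
      _ = (CA + CB + CF1 + CF2) * RHS0 d b₁ b₂ L x := by ring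
  calc (∑' y : Fin d → ℤ,
        vee (nrm d (x - y)) L ^ (-(d : ℝ)) *
          Real.log (vee (nrm d (x - y) / L) 1) ^ (-1 : ℝ) *
        (vee (nrm d y) L ^ (-b₁) * Real.log (vee (nrm d y / L) 1) ^ (-b₂)))
      = ∑' y : Fin d → ℤ, FF d b₁ b₂ L x y := rfl
    _ ≤ (CA + CB + CF1 + CF2) * RHS0 d b₁ b₂ L x := tsum_le_of_sum_le' hRtot key
    _ = (CA + CB + CF1 + CF2) * Real.log (Real.log (vee (nrm d x / L) 1)) *
          (vee (nrm d x) L ^ (-b₁) * Real.log (vee (nrm d x / L) 1) ^ (-b₂)) := by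
        rw [RHS0_eq]
        ring
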